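/- arXiv:2007.01987 — 7 statements merged into one kernel-verified Lean document; each statement's English description precedes it below -/
import Mathlib

section
/- Let d ≥ 1 and let μ be a nonnegative Borel measure on ℝ^d. Then for every t > 0 and every β > 0: ∫_0^t e^{−β·min(s, t−s)} ( ∫_{ℝ^d} e^{−s(t−s)‖y‖²/t} μ(dy) ) ds ≤ 4 ∫_{ℝ^d} (2β + ‖y‖²)^{−1} μ(dy). -/
open MeasureTheory

lemma exp_lintegral_Ioi (c : ℝ) (hc : 0 < c) :
    ∫⁻ x in Set.Ioi (0 : ℝ), ENNReal.ofReal (Real.exp (-(c * x))) = ENNReal.ofReal c⁻¹ := by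
  have hint : IntegrableOn (fun x : ℝ => Real.exp (-(c * x))) (Set.Ioi 0) := by
    simpa [neg_mul] using exp_neg_integrableOn_Ioi 0 hc
  rw [← ofReal_integral_eq_lintegral_ofReal hint
      (Filter.Eventually.of_forall fun x => (Real.exp_pos _).le)]
  congr 1
  have h := integral_comp_mul_left_Ioi (fun u => Real.exp (-u)) 0 hc
  simp only [mul_zero, integral_exp_neg_Ioi_zero, smul_eq_mul, mul_one] at h
  exact h

lemma exp_min_lintegral (t : ℝ) (ht : 0 < t) (c : ℝ) (hc : 0 < c) :
    ∫⁻ s in Set.Ioc (0 : ℝ) t,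
        (ENNReal.ofReal (Real.exp (-(c * s))) + ENNReal.ofReal (Real.exp (-(c * (t - s)))))
      ≤ 2 * ENNReal.ofReal c⁻¹ := by
  have hmeas : Measurable fun s : ℝ => ENNReal.ofReal (Real.exp (-(c * s))) := by fun_prop
  rw [lintegral_add_left hmeas]
  have h1 : ∫⁻ s in Set.Ioc (0 : ℝ) t, ENNReal.ofReal (Real.exp (-(c * s)))
      ≤ ENNReal.ofReal c⁻¹ := by
    rw [← exp_lintegral_Ioi c hc]
    exact lintegral_mono_set Set.Ioc_subset_Ioi_self
  have h2 : ∫⁻ s in Set.Ioc (0 : ℝ) t, ENNReal.ofReal (Real.exp (-(c * (t - s))))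
      ≤ ENNReal.ofReal c⁻¹ := by
    have hmp : MeasurePreserving (fun s : ℝ => t - s) volume volume :=
      ⟨(measurable_const.sub measurable_id), Measure.map_sub_left_eq_self volume t⟩
    have hemb : MeasurableEmbedding (fun s : ℝ => t - s) :=
      (MeasurableEquiv.subLeft t).measurableEmbedding
    have hpre : (fun s : ℝ => t - s) ⁻¹' Set.Ici (0 : ℝ) = Set.Iic t := by
      ext x; simp [sub_nonneg]
    calc ∫⁻ s in Set.Ioc (0 : ℝ) t, ENNReal.ofReal (Real.exp (-(c * (t - s))))
        ≤ ∫⁻ s in Set.Iic t, ENNReal.ofReal (Real.exp (-(c * (t - s)))) :=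
          lintegral_mono_set Set.Ioc_subset_Iic_self
      _ = ∫⁻ u in Set.Ici (0 : ℝ), ENNReal.ofReal (Real.exp (-(c * u))) := by
          rw [← hpre]
          exact hmp.setLIntegral_comp_preimage_emb hemb
            (fun u => ENNReal.ofReal (Real.exp (-(c * u)))) (Set.Ici 0)
      _ = ∫⁻ u in Set.Ioi (0 : ℝ), ENNReal.ofReal (Real.exp (-(c * u))) := by
          refine setLIntegral_congr ?_
          exact (Ioi_ae_eq_Ici' (measure_singleton (0 : ℝ))).symm
      _ = ENNReal.ofReal c⁻¹ := exp_lintegral_Ioi c hc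
  calc _ ≤ ENNReal.ofReal c⁻¹ + ENNReal.ofReal c⁻¹ := add_le_add h1 h2
    _ = 2 * ENNReal.ofReal c⁻¹ := (two_mul _).symm

/-- For a nonnegative Borel measure `μ` on `ℝ^d`, `t > 0` and `β > 0`:
`∫_0^t e^{-β min(s,t-s)} (∫ e^{-s(t-s)‖y‖²/t} μ(dy)) ds ≤ 4 ∫ (2β+‖y‖²)⁻¹ μ(dy)`,
in the extended reals. -/
theorem lemma_p_conv_f (d : ℕ) (hd : 1 ≤ d) (μ : Measure (EuclideanSpace ℝ (Fin d)))
    (t β : ℝ) (ht : 0 < t) (hβ : 0 < β) :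
    (∫⁻ s in Set.Ioc (0 : ℝ) t,
        ENNReal.ofReal (Real.exp (-β * min s (t - s))) *
          ∫⁻ y, ENNReal.ofReal (Real.exp (-(s * (t - s) * ‖y‖ ^ 2 / t))) ∂μ)
      ≤ 4 * ∫⁻ y, ENNReal.ofReal ((2 * β + ‖y‖ ^ 2)⁻¹) ∂μ := by
  by_cases hfin : ∀ n : ℕ, μ (Metric.ball 0 n) < ⊤
  swap
  · -- RHS is infinite
    push_neg at hfin
    obtain ⟨n, hn⟩ := hfin
    have hn' : μ (Metric.ball 0 n) = ⊤ := top_le_iff.mp hn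
    have hlb : ∫⁻ y, ENNReal.ofReal ((2 * β + ‖y‖ ^ 2)⁻¹) ∂μ = ⊤ := by
      refine top_le_iff.mp ?_
      calc (⊤ : ENNReal) = ENNReal.ofReal ((2 * β + (n : ℝ) ^ 2)⁻¹) * μ (Metric.ball 0 n) := by
            rw [hn', ENNReal.mul_top]
            simp only [ne_eq, ENNReal.ofReal_eq_zero, not_le, inv_pos]
            positivity
        _ = ∫⁻ _ in Metric.ball 0 n, ENNReal.ofReal ((2 * β + (n : ℝ) ^ 2)⁻¹) ∂μ := by
            rw [setLIntegral_const]
        _ ≤ ∫⁻ y in Metric.ball 0 n, ENNReal.ofReal ((2 * β + ‖y‖ ^ 2)⁻¹) ∂μ := by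
            refine setLIntegral_mono' measurableSet_ball fun y hy => ?_
            refine ENNReal.ofReal_le_ofReal (inv_anti₀ (by positivity) ?_)
            have hylt : ‖y‖ < n := by simpa [Metric.mem_ball, dist_zero_right] using hy
            have : ‖y‖ ^ 2 ≤ (n : ℝ) ^ 2 := by
              have h0 : (0 : ℝ) ≤ ‖y‖ := norm_nonneg _
              nlinarith
            linarith
        _ ≤ ∫⁻ y, ENNReal.ofReal ((2 * β + ‖y‖ ^ 2)⁻¹) ∂μ := setLIntegral_le_lintegral _ _
    rw [hlb, ENNReal.mul_top (by norm_num)]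
    exact le_top
  -- μ is sigma-finite
  haveI : SigmaFinite μ := by
    refine Measure.sigmaFinite_of_countable
      (S := Set.range fun n : ℕ => Metric.ball (0 : EuclideanSpace ℝ (Fin d)) n)
      (Set.countable_range _) ?_ ?_
    · rintro s ⟨n, rfl⟩
      exact hfin n
    · rw [Set.sUnion_range]
      exact Metric.iUnion_ball_nat 0
  -- measurability of the joint integrand
  have hcont : Measurable fun p : ℝ × EuclideanSpace ℝ (Fin d) =>
      ENNReal.ofReal (Real.exp (-β * min p.1 (t - p.1))) *
        ENNReal.ofReal (Real.exp (-(p.1 * (t - p.1) * ‖p.2‖ ^ 2 / t))) := by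
    refine Measurable.mul (f := fun p : ℝ × EuclideanSpace ℝ (Fin d) => ENNReal.ofReal (Real.exp (-β * min p.1 (t - p.1))))
      (g := fun p : ℝ × EuclideanSpace ℝ (Fin d) => ENNReal.ofReal (Real.exp (-(p.1 * (t - p.1) * ‖p.2‖ ^ 2 / t)))) ?_ ?_
    · exact ENNReal.measurable_ofReal.comp
        (Real.continuous_exp.comp (by fun_prop)).measurable
    · exact ENNReal.measurable_ofReal.comp
        (Real.continuous_exp.comp (by fun_prop)).measurable
  -- rewrite LHS with the constant pulled inside the inner integral
  have hstep1 : (∫⁻ s in Set.Ioc (0 : ℝ) t,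
        ENNReal.ofReal (Real.exp (-β * min s (t - s))) *
          ∫⁻ y, ENNReal.ofReal (Real.exp (-(s * (t - s) * ‖y‖ ^ 2 / t))) ∂μ)
      = ∫⁻ s in Set.Ioc (0 : ℝ) t, ∫⁻ y,
          ENNReal.ofReal (Real.exp (-β * min s (t - s))) *
            ENNReal.ofReal (Real.exp (-(s * (t - s) * ‖y‖ ^ 2 / t))) ∂μ := by
    refine setLIntegral_congr_fun measurableSet_Ioc (fun s _ => ?_)
    rw [lintegral_const_mul' _ _ ENNReal.ofReal_ne_top]
  rw [hstep1]
  rw [lintegral_lintegral_swap hcont.aemeasurable]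
  -- bound inner s-integral for each y
  have hbound : ∀ y : EuclideanSpace ℝ (Fin d),
      (∫⁻ s in Set.Ioc (0 : ℝ) t,
          ENNReal.ofReal (Real.exp (-β * min s (t - s))) *
            ENNReal.ofReal (Real.exp (-(s * (t - s) * ‖y‖ ^ 2 / t))))
        ≤ 4 * ENNReal.ofReal ((2 * β + ‖y‖ ^ 2)⁻¹) := by
    intro y
    set q : ℝ := ‖y‖ ^ 2 with hq
    have hq0 : 0 ≤ q := by positivity
    set c : ℝ := β + q / 2 with hc
    have hc0 : 0 < c := by positivity
    have hpt : ∀ s ∈ Set.Ioc (0 : ℝ) t,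
        ENNReal.ofReal (Real.exp (-β * min s (t - s))) *
            ENNReal.ofReal (Real.exp (-(s * (t - s) * q / t)))
          ≤ ENNReal.ofReal (Real.exp (-(c * s))) + ENNReal.ofReal (Real.exp (-(c * (t - s)))) := by
      intro s hs
      obtain ⟨hs0, hst⟩ := hs
      have hts0 : 0 ≤ t - s := by linarith
      set m : ℝ := min s (t - s) with hm
      have hm0 : 0 ≤ m := le_min hs0.le hts0
      have hmax : t / 2 ≤ max s (t - s) := by
        rcases le_total s (t - s) with h | h
        · rw [max_eq_right h]; linarith
        · rw [max_eq_left h]; linarith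
      have hprod : m * (t / 2) ≤ s * (t - s) := by
        have : s * (t - s) = m * max s (t - s) := by
          rcases le_total s (t - s) with h | h
          · rw [hm, min_eq_left h, max_eq_right h]
          · rw [hm, min_eq_right h, max_eq_left h]; ring
        rw [this]
        exact mul_le_mul_of_nonneg_left hmax hm0
      have hkey : -β * m + -(s * (t - s) * q / t) ≤ -(c * m) := by
        have h1 : m * q / 2 ≤ s * (t - s) * q / t := by
          rw [div_le_div_iff₀ (by norm_num : (0:ℝ) < 2) ht]
          nlinarith [mul_le_mul_of_nonneg_right hprod hq0]
        have hcm : c * m = β * m + m * q / 2 := by rw [hc]; ring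
        have hrw : s * (t - s) * q / t = s * (t - s) * q / t := rfl
        linarith [h1]
      calc ENNReal.ofReal (Real.exp (-β * m)) * ENNReal.ofReal (Real.exp (-(s * (t - s) * q / t)))
          = ENNReal.ofReal (Real.exp (-β * m + -(s * (t - s) * q / t))) := by
            rw [Real.exp_add, ENNReal.ofReal_mul (Real.exp_pos _).le]
        _ ≤ ENNReal.ofReal (Real.exp (-(c * m))) :=
            ENNReal.ofReal_le_ofReal (Real.exp_le_exp.mpr hkey)
        _ ≤ ENNReal.ofReal (Real.exp (-(c * s))) + ENNReal.ofReal (Real.exp (-(c * (t - s)))) := by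
            rcases min_cases s (t - s) with ⟨hmin, _⟩ | ⟨hmin, _⟩
            · rw [hm, hmin]; exact le_add_of_nonneg_right zero_le
            · rw [hm, hmin]; exact le_add_of_nonneg_left zero_le
    calc (∫⁻ s in Set.Ioc (0 : ℝ) t,
          ENNReal.ofReal (Real.exp (-β * min s (t - s))) *
            ENNReal.ofReal (Real.exp (-(s * (t - s) * q / t))))
        ≤ ∫⁻ s in Set.Ioc (0 : ℝ) t,
            (ENNReal.ofReal (Real.exp (-(c * s))) + ENNReal.ofReal (Real.exp (-(c * (t - s))))) :=
          setLIntegral_mono' measurableSet_Ioc hpt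
      _ ≤ 2 * ENNReal.ofReal c⁻¹ := exp_min_lintegral t ht c hc0
      _ = 4 * ENNReal.ofReal ((2 * β + q)⁻¹) := by
          have hcinv : c⁻¹ = 2 * (2 * β + q)⁻¹ := by
            rw [hc]
            have h1 : (2 * β + q) ≠ 0 := by positivity
            have h2 : (β + q / 2) ≠ 0 := by positivity
            field_simp
          rw [hcinv, ENNReal.ofReal_mul (by norm_num : (0:ℝ) ≤ 2)]
          rw [ENNReal.ofReal_ofNat]
          ring
  refine le_trans (lintegral_mono hbound) ?_
  exact le_of_eq (lintegral_const_mul' 4 _ (by norm_num))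
end

section
/- Let d ≥ 1 and let f be a nonnegative Borel measure on ℝ^d. Let ψ(x) := ∏_{j=1}^d max(1 − |x_j|, 0) for x ∈ ℝ^d (so ψ = I_1 * Ĩ_1, the autocorrelation of the indicator of the unit cube). Then 2^{1−2d} ∫_0^∞ r^{−d} f([−r, r]^d) dr ≤ ∫_0^∞ r^{−d} ( ∫_{ℝ^d} ψ(z/r) f(dz) ) dr ≤ ∫_0^∞ r^{−d} f([−r, r]^d) dr, where all quantities are in the extended reals. -/
open MeasureTheory

open scoped ENNReal

/-- `ψ(x) = ∏_{j=1}^d (1 - |x_j|)_+`, the autocorrelation of the indicator of the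
unit cube. -/
noncomputable def psiCube (d : ℕ) (x : EuclideanSpace ℝ (Fin d)) : ℝ :=
  ∏ j, max (1 - |x j|) 0

lemma psiCube_le_one (d : ℕ) (x : EuclideanSpace ℝ (Fin d)) : psiCube d x ≤ 1 :=
  Finset.prod_le_one (fun j _ => le_max_right _ _)
    (fun j _ => max_le (by linarith [abs_nonneg (x j)]) one_pos.le)

lemma psiCube_eq_zero (d : ℕ) (r : ℝ) (hr : 0 < r) (z : EuclideanSpace ℝ (Fin d))
    (hz : ¬ ∀ j, |z j| ≤ r) : psiCube d (r⁻¹ • z) = 0 := by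
  push_neg at hz
  obtain ⟨j, hj⟩ := hz
  apply Finset.prod_eq_zero (Finset.mem_univ j)
  have h1 : |(r⁻¹ • z) j| = |z j| / r := by
    simp [PiLp.smul_apply, abs_mul, abs_of_pos (inv_pos.mpr hr), div_eq_inv_mul]
  have h2 : 1 < |(r⁻¹ • z) j| := by
    rw [h1, lt_div_iff₀ hr]; linarith
  exact max_eq_right (by linarith)

lemma psiCube_ge (d : ℕ) (r : ℝ) (hr : 0 < r) (z : EuclideanSpace ℝ (Fin d))
    (hz : ∀ j, |z j| ≤ r / 2) : (2:ℝ) ^ (-(d:ℝ)) ≤ psiCube d (r⁻¹ • z) := by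
  have h2 : (2:ℝ) ^ (-(d:ℝ)) = ∏ _j : Fin d, (1/2 : ℝ) := by
    rw [Finset.prod_const, Real.rpow_neg (by norm_num), Real.rpow_natCast]
    simp [one_div, inv_pow, Finset.card_univ]
  rw [h2]
  apply Finset.prod_le_prod (fun j _ => by norm_num)
  intro j _
  have h1 : |(r⁻¹ • z) j| = |z j| / r := by
    simp [PiLp.smul_apply, abs_mul, abs_of_pos (inv_pos.mpr hr), div_eq_inv_mul]
  have h3 : |(r⁻¹ • z) j| ≤ 1/2 := by
    rw [h1, div_le_iff₀ hr]
    calc |z j| ≤ r/2 := hz j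
    _ = 1/2 * r := by ring
  calc (1/2:ℝ) = 1 - 1/2 := by norm_num
  _ ≤ 1 - |(r⁻¹ • z) j| := by linarith
  _ ≤ max (1 - |(r⁻¹ • z) j|) 0 := le_max_left _ _

lemma measC (d : ℕ) (r : ℝ) : MeasurableSet {x : EuclideanSpace ℝ (Fin d) | ∀ j, |x j| ≤ r} := by
  have h : {x : EuclideanSpace ℝ (Fin d) | ∀ j, |x j| ≤ r} = ⋂ j, {x | |x j| ≤ r} := by
    ext x; simp
  rw [h]
  exact MeasurableSet.iInter fun j =>
    measurableSet_le ((EuclideanSpace.proj j).continuous.measurable.abs) measurable_const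

lemma lintegral_Ioi_two_mul (g : ℝ → ℝ≥0∞) (hg : Measurable g) :
    ∫⁻ r in Set.Ioi (0:ℝ), g r = 2 * ∫⁻ s in Set.Ioi (0:ℝ), g (2 * s) := by
  have h2 : (fun x : ℝ => 2 * x) ⁻¹' (Set.Ioi 0) = Set.Ioi 0 := by
    ext x; simp only [Set.mem_preimage, Set.mem_Ioi]
    constructor <;> intro h <;> linarith
  have hmap : Measure.map (fun x : ℝ => 2 * x) (volume.restrict (Set.Ioi 0))
      = (ENNReal.ofReal |(2:ℝ)⁻¹|) • volume.restrict (Set.Ioi 0) := by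
    conv_lhs => rw [← h2]
    rw [← Measure.restrict_map (measurable_const_mul 2) measurableSet_Ioi,
      Real.map_volume_mul_left (two_ne_zero), Measure.restrict_smul]
  have hm := lintegral_map hg (measurable_const_mul (2:ℝ))
    (μ := volume.restrict (Set.Ioi 0))
  rw [← hm, hmap, lintegral_smul_measure]
  have h3 : ENNReal.ofReal |(2:ℝ)⁻¹| = (2:ℝ≥0∞)⁻¹ := by
    rw [abs_of_pos (by norm_num)]
    simp [ENNReal.ofReal_inv_of_pos]
  rw [h3, smul_eq_mul, ← mul_assoc, ENNReal.mul_inv_cancel two_ne_zero ENNReal.ofNat_ne_top, one_mul]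

/-- For a nonnegative Borel measure `f` on `ℝ^d`:
`2^{1-2d} ∫_0^∞ r^{-d} f([-r,r]^d) dr ≤ ∫_0^∞ r^{-d} (∫ ψ(z/r) f(dz)) dr
  ≤ ∫_0^∞ r^{-d} f([-r,r]^d) dr`, in the extended reals. -/
theorem R_f_bounds (d : ℕ) (hd : 1 ≤ d) (f : Measure (EuclideanSpace ℝ (Fin d))) :
    ENNReal.ofReal ((2 : ℝ) ^ ((1 : ℝ) - 2 * d)) *
        (∫⁻ r in Set.Ioi (0 : ℝ),
          ENNReal.ofReal (r ^ (-(d : ℝ))) * f {x : EuclideanSpace ℝ (Fin d) | ∀ j, |x j| ≤ r})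
      ≤ (∫⁻ r in Set.Ioi (0 : ℝ),
          ENNReal.ofReal (r ^ (-(d : ℝ))) *
            ∫⁻ z, ENNReal.ofReal (psiCube d (r⁻¹ • z)) ∂f) ∧
    (∫⁻ r in Set.Ioi (0 : ℝ),
        ENNReal.ofReal (r ^ (-(d : ℝ))) *
          ∫⁻ z, ENNReal.ofReal (psiCube d (r⁻¹ • z)) ∂f)
      ≤ ∫⁻ r in Set.Ioi (0 : ℝ),
          ENNReal.ofReal (r ^ (-(d : ℝ))) * f {x : EuclideanSpace ℝ (Fin d) | ∀ j, |x j| ≤ r} := by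
  set E := EuclideanSpace ℝ (Fin d)
  set C : ℝ → Set E := fun r => {x : E | ∀ j, |x j| ≤ r} with hC
  set c : ℝ≥0∞ := ENNReal.ofReal ((2:ℝ) ^ (-(d:ℝ))) with hc
  have hcne : c ≠ ⊤ := ENNReal.ofReal_ne_top
  -- upper bound on the inner integral
  have hupper : ∀ r : ℝ, 0 < r →
      (∫⁻ z, ENNReal.ofReal (psiCube d (r⁻¹ • z)) ∂f) ≤ f (C r) := by
    intro r hr
    have hpt : ∀ z, ENNReal.ofReal (psiCube d (r⁻¹ • z))
        ≤ (C r).indicator (fun _ => (1:ℝ≥0∞)) z := by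
      intro z
      by_cases hz : z ∈ C r
      · rw [Set.indicator_of_mem hz]
        exact ENNReal.ofReal_le_one.mpr (psiCube_le_one d _)
      · rw [Set.indicator_of_notMem hz, psiCube_eq_zero d r hr z hz]
        simp
    calc (∫⁻ z, ENNReal.ofReal (psiCube d (r⁻¹ • z)) ∂f)
        ≤ ∫⁻ z, (C r).indicator (fun _ => (1:ℝ≥0∞)) z ∂f := lintegral_mono hpt
      _ = f (C r) := by
          rw [lintegral_indicator (measC d r : MeasurableSet (C r))]; simp; rfl
  -- lower bound on the inner integral
  have hlower : ∀ r : ℝ, 0 < r →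
      c * f (C (r/2)) ≤ ∫⁻ z, ENNReal.ofReal (psiCube d (r⁻¹ • z)) ∂f := by
    intro r hr
    have hpt : ∀ z, (C (r/2)).indicator (fun _ => c) z
        ≤ ENNReal.ofReal (psiCube d (r⁻¹ • z)) := by
      intro z
      by_cases hz : z ∈ C (r/2)
      · rw [Set.indicator_of_mem hz]
        exact ENNReal.ofReal_le_ofReal (psiCube_ge d r hr z hz)
      · rw [Set.indicator_of_notMem hz]; exact zero_le
    calc c * f (C (r/2)) = ∫⁻ z, (C (r/2)).indicator (fun _ => c) z ∂f := by
          rw [lintegral_indicator_const (measC d (r/2) : MeasurableSet (C (r/2)))]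
      _ ≤ _ := lintegral_mono hpt
  constructor
  · -- lower bound
    have hmono : Monotone (fun r : ℝ => f (C (r/2))) := by
      intro a b hab
      exact measure_mono (fun x hx j => le_trans (hx j) (by linarith))
    have hDmeas : Measurable (fun r : ℝ => ENNReal.ofReal ((r ^ d)⁻¹) * f (C (r/2))) :=
      ((measurable_id.pow_const d).inv.ennreal_ofReal).mul hmono.measurable
    have hc' : c = ENNReal.ofReal (((2:ℝ) ^ d)⁻¹) := by
      rw [hc, Real.rpow_neg (by norm_num), Real.rpow_natCast]
    set A : ℝ≥0∞ := ∫⁻ s in Set.Ioi (0:ℝ), ENNReal.ofReal ((s ^ d)⁻¹) * f (C s) with hA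
    have hsub := lintegral_Ioi_two_mul (fun r => ENNReal.ofReal ((r ^ d)⁻¹) * f (C (r/2)))
      hDmeas
    have hcong : ∫⁻ s in Set.Ioi (0:ℝ),
        ENNReal.ofReal (((2*s) ^ d)⁻¹) * f (C ((2*s)/2)) = c * A := by
      rw [hA, ← lintegral_const_mul' _ _ hcne]
      apply setLIntegral_congr_fun measurableSet_Ioi
      intro s hs; dsimp only
      have h1 : ((2*s : ℝ) ^ d)⁻¹ = ((2:ℝ) ^ d)⁻¹ * ((s:ℝ) ^ d)⁻¹ := by
        rw [mul_pow, mul_inv]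
      have h2 : (2*s)/2 = s := by ring
      rw [h1, h2, ENNReal.ofReal_mul (by positivity), ← hc', mul_assoc]
    have hstep : ∫⁻ r in Set.Ioi (0:ℝ), ENNReal.ofReal ((r ^ d)⁻¹) * f (C (r/2))
        = 2 * (c * A) := by rw [hsub, hcong]
    have hcongB : ∫⁻ r in Set.Ioi (0:ℝ),
        ENNReal.ofReal (r ^ (-(d:ℝ))) * f (C r) = A := by
      rw [hA]
      apply setLIntegral_congr_fun measurableSet_Ioi
      intro r hr; dsimp only
      rw [Real.rpow_neg hr.le, Real.rpow_natCast]
    have hineq : ∫⁻ r in Set.Ioi (0:ℝ), c * (ENNReal.ofReal ((r ^ d)⁻¹) * f (C (r/2)))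
        ≤ ∫⁻ r in Set.Ioi (0:ℝ), ENNReal.ofReal (r ^ (-(d:ℝ))) *
            ∫⁻ z, ENNReal.ofReal (psiCube d (r⁻¹ • z)) ∂f := by
      apply lintegral_mono_ae
      rw [ae_restrict_iff' measurableSet_Ioi]
      filter_upwards with r hr
      have hrw : ENNReal.ofReal ((r ^ d)⁻¹) = ENNReal.ofReal (r ^ (-(d:ℝ))) := by
        rw [Real.rpow_neg hr.le, Real.rpow_natCast]
      calc c * (ENNReal.ofReal ((r ^ d)⁻¹) * f (C (r/2)))
          = ENNReal.ofReal (r ^ (-(d:ℝ))) * (c * f (C (r/2))) := by rw [hrw]; ring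
        _ ≤ _ := mul_le_mul_right (hlower r hr) _
    have hkey : ENNReal.ofReal ((2:ℝ) ^ ((1:ℝ) - 2 * d)) = c * (2 * c) := by
      have hr : (2:ℝ) ^ ((1:ℝ) - 2 * d)
          = (2:ℝ) ^ (-(d:ℝ)) * (2 * (2:ℝ) ^ (-(d:ℝ))) := by
        rw [show ((1:ℝ) - 2*d) = (-(d:ℝ)) + (1 + (-(d:ℝ))) by ring,
          Real.rpow_add two_pos, Real.rpow_add two_pos, Real.rpow_one]
      rw [hr, ENNReal.ofReal_mul (Real.rpow_nonneg (by norm_num) _),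
        ENNReal.ofReal_mul (by norm_num : (0:ℝ) ≤ 2), hc]
      norm_num
    calc ENNReal.ofReal ((2:ℝ) ^ ((1:ℝ) - 2 * d)) *
          ∫⁻ r in Set.Ioi (0:ℝ), ENNReal.ofReal (r ^ (-(d:ℝ))) * f (C r)
        = c * (2 * (c * A)) := by rw [hkey, hcongB]; ring
      _ = c * ∫⁻ r in Set.Ioi (0:ℝ), ENNReal.ofReal ((r ^ d)⁻¹) * f (C (r/2)) := by
          rw [hstep]
      _ = ∫⁻ r in Set.Ioi (0:ℝ), c * (ENNReal.ofReal ((r ^ d)⁻¹) * f (C (r/2))) := by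
          rw [lintegral_const_mul' _ _ hcne]
      _ ≤ _ := hineq
  · -- upper bound
    apply lintegral_mono_ae
    rw [ae_restrict_iff' measurableSet_Ioi]
    filter_upwards with r hr
    exact mul_le_mul_right (hupper r hr) _
end

section
/- Let d ≥ 2 and let f be a σ-finite nonnegative Borel measure on ℝ^d. Then ∫_0^∞ r^{−d} f([−r, r]^d) dr < ∞ if and only if ∫_{ℝ^d} ‖x‖^{1−d} f(dx) < ∞. -/
open MeasureTheory
open scoped ENNReal NNReal

lemma ennreal_rpow_anti {a b : ℝ≥0∞} (h : a ≤ b) {s : ℝ} (hs : s ≤ 0) : b ^ s ≤ a ^ s := by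
  rw [← neg_neg s, ENNReal.rpow_neg b, ENNReal.rpow_neg a]
  exact ENNReal.inv_le_inv.mpr (ENNReal.rpow_le_rpow h (neg_nonneg.mpr hs))

lemma inner_lintegral_aux (d : ℕ) (hd : 2 ≤ d) {m : ℝ} (hm : 0 ≤ m) :
    ∫⁻ r in Set.Ioi (0 : ℝ), ENNReal.ofReal (r ^ (-(d : ℝ))) * (Set.Ici m).indicator 1 r
      = ENNReal.ofReal (((d : ℝ) - 1)⁻¹) * (ENNReal.ofReal m) ^ ((1 : ℝ) - d) := by
  have hd1 : (1 : ℝ) < (d : ℝ) := by exact_mod_cast (by omega : 1 < d)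
  have hs_neg : (1 : ℝ) - d < 0 := by linarith
  have hrw : ∀ r : ℝ, ENNReal.ofReal (r ^ (-(d : ℝ))) * (Set.Ici m).indicator 1 r
      = (Set.Ici m).indicator (fun r => ENNReal.ofReal (r ^ (-(d : ℝ)))) r := by
    intro r
    by_cases h : r ∈ Set.Ici m <;> simp [Set.indicator, h]
  simp only [hrw]
  rw [lintegral_indicator measurableSet_Ici, Measure.restrict_restrict measurableSet_Ici]
  rcases eq_or_lt_of_le hm with hm0 | hm0
  · -- m = 0
    subst hm0
    have hset : Set.Ici (0 : ℝ) ∩ Set.Ioi (0 : ℝ) = Set.Ioi (0 : ℝ) := by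
      ext r; simp (config := { contextual := true }) [le_of_lt]
    rw [hset]
    have hRHS : ENNReal.ofReal (((d : ℝ) - 1)⁻¹) * (ENNReal.ofReal (0 : ℝ)) ^ ((1 : ℝ) - d)
        = ⊤ := by
      rw [ENNReal.ofReal_zero, ENNReal.zero_rpow_of_neg hs_neg, ENNReal.mul_top]
      exact (ENNReal.ofReal_pos.mpr (inv_pos.mpr (by linarith))).ne'
    rw [hRHS]
    by_contra h
    have hlt : ∫⁻ r in Set.Ioi (0 : ℝ), ENNReal.ofReal (r ^ (-(d : ℝ))) < ⊤ :=
      lt_top_iff_ne_top.mpr h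
    have hnn : 0 ≤ᵐ[volume.restrict (Set.Ioi (0 : ℝ))] fun r : ℝ => r ^ (-(d : ℝ)) := by
      filter_upwards [ae_restrict_mem measurableSet_Ioi] with r hr
      exact Real.rpow_nonneg (le_of_lt hr) _
    have hmeas : Measurable fun r : ℝ => r ^ (-(d : ℝ)) :=
      measurable_id.pow measurable_const
    have : IntegrableOn (fun r : ℝ => r ^ (-(d : ℝ))) (Set.Ioi 0) :=
      ⟨hmeas.aestronglyMeasurable, (hasFiniteIntegral_iff_ofReal hnn).mpr hlt⟩
    exact not_integrableOn_Ioi_rpow _ this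
  · -- 0 < m
    have hset : Set.Ici m ∩ Set.Ioi (0 : ℝ) = Set.Ici m := by
      apply Set.inter_eq_self_of_subset_left
      intro r hr
      exact lt_of_lt_of_le hm0 hr
    rw [hset, ← restrict_Ioi_eq_restrict_Ici]
    have ha : -(d : ℝ) < -1 := by linarith
    have hInt := integrableOn_Ioi_rpow_of_lt ha hm0
    have hnn : 0 ≤ᵐ[volume.restrict (Set.Ioi m)] fun r : ℝ => r ^ (-(d : ℝ)) := by
      filter_upwards [ae_restrict_mem measurableSet_Ioi] with r hr
      exact Real.rpow_nonneg (le_of_lt (lt_trans hm0 hr)) _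
    rw [← ofReal_integral_eq_lintegral_ofReal hInt hnn,
      integral_Ioi_rpow_of_lt ha hm0,
      ENNReal.ofReal_rpow_of_pos hm0,
      ← ENNReal.ofReal_mul (inv_nonneg.mpr (by linarith : (0:ℝ) ≤ (d:ℝ) - 1))]
    congr 1
    have h1 : -(d : ℝ) + 1 = 1 - d := by ring
    rw [h1]
    have hne : (1 : ℝ) - d ≠ 0 := by linarith
    have hne' : (d : ℝ) - 1 ≠ 0 := by linarith
    field_simp
    ring

/-- For `d ≥ 2` and a σ-finite nonnegative Borel measure `f` on `ℝ^d`: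
`∫_0^∞ r^{-d} f([-r,r]^d) dr < ∞ ↔ ∫ ‖x‖^{1-d} f(dx) < ∞`,
where `‖x‖^{1-d}` is interpreted as `+∞` at `x = 0` (via `ℝ≥0∞`-valued `rpow`). -/
theorem R_f_finite_iff (d : ℕ) (hd : 2 ≤ d) (f : Measure (EuclideanSpace ℝ (Fin d)))
    [SigmaFinite f] :
    (∫⁻ r in Set.Ioi (0 : ℝ),
        ENNReal.ofReal (r ^ (-(d : ℝ))) * f {x : EuclideanSpace ℝ (Fin d) | ∀ j, |x j| ≤ r}) < ⊤
      ↔ (∫⁻ x, (‖x‖₊ : ℝ≥0∞) ^ ((1 : ℝ) - d) ∂f) < ⊤ := by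
  classical
  have hd1 : (1 : ℝ) < (d : ℝ) := by exact_mod_cast (by omega : 1 < d)
  have hs_neg : (1 : ℝ) - d < 0 := by linarith
  -- the sup norm
  set M : EuclideanSpace ℝ (Fin d) → ℝ := fun x => ‖(fun j => x j : Fin d → ℝ)‖ with hM
  have hM_meas : Measurable M := by
    apply Measurable.norm
    exact measurable_pi_lambda _ fun j => (EuclideanSpace.proj j).continuous.measurable
  have hM_nonneg : ∀ x, 0 ≤ M x := fun x => norm_nonneg _
  have hcoord : ∀ (x : EuclideanSpace ℝ (Fin d)) j, |x j| ≤ ‖x‖ := by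
    intro x j
    rw [EuclideanSpace.norm_eq]
    have h1 : |x j| = Real.sqrt (‖x j‖ ^ 2) := by
      rw [Real.sqrt_sq_eq_abs, Real.norm_eq_abs, abs_abs]
    rw [h1]
    apply Real.sqrt_le_sqrt
    exact Finset.single_le_sum (f := fun i => ‖x i‖ ^ 2) (fun i _ => sq_nonneg _) (Finset.mem_univ j)
  have hM_le : ∀ x, M x ≤ ‖x‖ := by
    intro x
    show ‖(fun j => x j : Fin d → ℝ)‖ ≤ ‖x‖
    refine (pi_norm_le_iff_of_nonneg (norm_nonneg x)).mpr fun j => ?_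
    simpa [Real.norm_eq_abs] using hcoord x j
  have hle_M : ∀ x, ‖x‖ ≤ Real.sqrt d * M x := by
    intro x
    rw [EuclideanSpace.norm_eq]
    have hsum : ∑ i, ‖x i‖ ^ 2 ≤ (d : ℝ) * (M x) ^ 2 := by
      calc ∑ i, ‖x i‖ ^ 2 ≤ ∑ _i : Fin d, (M x) ^ 2 :=
            Finset.sum_le_sum fun i _ => by
              have h1 : ‖x i‖ ≤ M x := norm_le_pi_norm (fun j => x j : Fin d → ℝ) i
              exact pow_le_pow_left₀ (norm_nonneg _) h1 2
        _ = (d : ℝ) * (M x) ^ 2 := by simp [mul_comm]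
    calc Real.sqrt (∑ i, ‖x i‖ ^ 2) ≤ Real.sqrt ((d : ℝ) * (M x) ^ 2) :=
          Real.sqrt_le_sqrt hsum
      _ = Real.sqrt d * M x := by
          rw [Real.sqrt_mul (by positivity), Real.sqrt_sq (hM_nonneg x)]
  have hsetM : ∀ r : ℝ, 0 < r →
      {x : EuclideanSpace ℝ (Fin d) | ∀ j, |x j| ≤ r} = {x | M x ≤ r} := by
    intro r hr
    ext x
    simp only [Set.mem_setOf_eq, hM]
    rw [pi_norm_le_iff_of_nonneg hr.le]
    simp [Real.norm_eq_abs]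
  -- the joint function
  set T : Set (ℝ × EuclideanSpace ℝ (Fin d)) := {p | M p.2 ≤ p.1} with hT
  set g : ℝ × EuclideanSpace ℝ (Fin d) → ℝ≥0∞ :=
    fun p => ENNReal.ofReal (p.1 ^ (-(d : ℝ))) with hg
  have hT_meas : MeasurableSet T :=
    measurableSet_le (hM_meas.comp measurable_snd) measurable_fst
  have hg_meas : Measurable g :=
    (measurable_fst.pow measurable_const).ennreal_ofReal
  have hF_meas : Measurable fun p : ℝ × EuclideanSpace ℝ (Fin d) => T.indicator g p :=
    hg_meas.indicator hT_meas
  -- Step A : rewrite the LHS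
  have key : (∫⁻ r in Set.Ioi (0 : ℝ),
        ENNReal.ofReal (r ^ (-(d : ℝ))) * f {x : EuclideanSpace ℝ (Fin d) | ∀ j, |x j| ≤ r})
      = ∫⁻ x, ENNReal.ofReal (((d : ℝ) - 1)⁻¹) * (ENNReal.ofReal (M x)) ^ ((1 : ℝ) - d) ∂f := by
    have step1 : (∫⁻ r in Set.Ioi (0 : ℝ),
          ENNReal.ofReal (r ^ (-(d : ℝ))) * f {x : EuclideanSpace ℝ (Fin d) | ∀ j, |x j| ≤ r})
        = ∫⁻ r in Set.Ioi (0 : ℝ), ∫⁻ x, T.indicator g (r, x) ∂f := by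
      apply setLIntegral_congr_fun measurableSet_Ioi
      intro r hr
      beta_reduce
      have hptwise : ∀ x, T.indicator g (r, x)
          = ENNReal.ofReal (r ^ (-(d : ℝ))) * ({x | M x ≤ r}).indicator 1 x := by
        intro x
        by_cases h : M x ≤ r <;>
          simp [Set.indicator, hT, hg, h]
      rw [hsetM r hr, lintegral_congr hptwise, lintegral_const_mul' _ _ ENNReal.ofReal_ne_top]
      congr 1
      exact (lintegral_indicator_one (hM_meas measurableSet_Iic)).symm
    have step2 : (∫⁻ r in Set.Ioi (0 : ℝ), ∫⁻ x, T.indicator g (r, x) ∂f)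
        = ∫⁻ x, (∫⁻ r in Set.Ioi (0 : ℝ), T.indicator g (r, x)) ∂f := by
      apply lintegral_lintegral_swap
      exact hF_meas.aemeasurable
    have step3 : ∀ x, (∫⁻ r in Set.Ioi (0 : ℝ), T.indicator g (r, x))
        = ENNReal.ofReal (((d : ℝ) - 1)⁻¹) * (ENNReal.ofReal (M x)) ^ ((1 : ℝ) - d) := by
      intro x
      have hptwise : ∀ r : ℝ, T.indicator g (r, x)
          = ENNReal.ofReal (r ^ (-(d : ℝ))) * (Set.Ici (M x)).indicator 1 r := by
        intro r
        by_cases h : M x ≤ r <;>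
          simp [Set.indicator, hT, hg, h]
      rw [lintegral_congr hptwise]
      exact inner_lintegral_aux d hd (hM_nonneg x)
    rw [step1, step2]
    exact lintegral_congr step3
  rw [key]
  -- constants
  set c : ℝ≥0∞ := ENNReal.ofReal (((d : ℝ) - 1)⁻¹) with hc
  have hc0 : c ≠ 0 := (ENNReal.ofReal_pos.mpr (inv_pos.mpr (by linarith))).ne'
  have hct : c ≠ ⊤ := ENNReal.ofReal_ne_top
  set C : ℝ≥0∞ := ENNReal.ofReal (Real.sqrt d) with hC
  have hC0 : C ≠ 0 := (ENNReal.ofReal_pos.mpr (Real.sqrt_pos.mpr (by linarith))).ne'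
  have hCt : C ≠ ⊤ := ENNReal.ofReal_ne_top
  set A : ℝ≥0∞ := ∫⁻ x, (ENNReal.ofReal (M x)) ^ ((1 : ℝ) - d) ∂f with hA
  set B : ℝ≥0∞ := ∫⁻ x, (‖x‖₊ : ℝ≥0∞) ^ ((1 : ℝ) - d) ∂f with hB
  have hcA : (∫⁻ x, c * (ENNReal.ofReal (M x)) ^ ((1 : ℝ) - d) ∂f) = c * A :=
    lintegral_const_mul' _ _ hct
  rw [hcA]
  -- pointwise comparisons
  have hBA : B ≤ A := by
    apply lintegral_mono
    intro x
    apply ennreal_rpow_anti _ hs_neg.le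
    rw [← ENNReal.ofReal_coe_nnreal, coe_nnnorm]
    exact ENNReal.ofReal_le_ofReal (hM_le x)
  set K : ℝ≥0∞ := C ^ (-((1 : ℝ) - d)) with hK
  have hKt : K ≠ ⊤ := (ENNReal.rpow_lt_top_of_nonneg (by linarith) hCt).ne
  have hAB : A ≤ K * B := by
    have hpt : ∀ x, (ENNReal.ofReal (M x)) ^ ((1 : ℝ) - d)
        ≤ K * (‖x‖₊ : ℝ≥0∞) ^ ((1 : ℝ) - d) := by
      intro x
      have h1 : (‖x‖₊ : ℝ≥0∞) ≤ C * ENNReal.ofReal (M x) := by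
        rw [← ENNReal.ofReal_coe_nnreal, coe_nnnorm, ← ENNReal.ofReal_mul (Real.sqrt_nonneg _)]
        exact ENNReal.ofReal_le_ofReal (hle_M x)
      have h2 : (C * ENNReal.ofReal (M x)) ^ ((1 : ℝ) - d) ≤ (‖x‖₊ : ℝ≥0∞) ^ ((1 : ℝ) - d) :=
        ennreal_rpow_anti h1 hs_neg.le
      have h3 : (C * ENNReal.ofReal (M x)) ^ ((1 : ℝ) - d)
          = C ^ ((1 : ℝ) - d) * (ENNReal.ofReal (M x)) ^ ((1 : ℝ) - d) :=
        ENNReal.mul_rpow_of_ne_top hCt ENNReal.ofReal_ne_top _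
      have h4 : K * (C ^ ((1 : ℝ) - d) * (ENNReal.ofReal (M x)) ^ ((1 : ℝ) - d))
          = (ENNReal.ofReal (M x)) ^ ((1 : ℝ) - d) := by
        rw [← mul_assoc, hK, ← ENNReal.rpow_add _ _ hC0 hCt]
        simp
      calc (ENNReal.ofReal (M x)) ^ ((1 : ℝ) - d)
          = K * (C ^ ((1 : ℝ) - d) * (ENNReal.ofReal (M x)) ^ ((1 : ℝ) - d)) := h4.symm
        _ = K * (C * ENNReal.ofReal (M x)) ^ ((1 : ℝ) - d) := by rw [h3]
        _ ≤ K * (‖x‖₊ : ℝ≥0∞) ^ ((1 : ℝ) - d) := mul_le_mul_right h2 _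
    calc A ≤ ∫⁻ x, K * (‖x‖₊ : ℝ≥0∞) ^ ((1 : ℝ) - d) ∂f := lintegral_mono hpt
      _ = K * B := lintegral_const_mul' _ _ hKt
  constructor
  · intro h
    have hA_lt : A < ⊤ := by
      by_contra hA'
      rw [not_lt, top_le_iff] at hA'
      rw [hA', ENNReal.mul_top hc0] at h
      exact absurd h (lt_irrefl _)
    exact lt_of_le_of_lt hBA hA_lt
  · intro h
    have hA_lt : A < ⊤ := lt_of_le_of_lt hAB (ENNReal.mul_lt_top hKt.lt_top h)
    exact ENNReal.mul_lt_top hct.lt_top hA_lt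
end

section
/- Let d ≥ 1 and define φ̃ : ℝ → ℝ by φ̃(u) = sin²(u)/u² for u ≠ 0 and φ̃(0) = 1. There exist constants 0 < c ≤ C (depending only on d) such that for every z ∈ ℝ^d with z ≠ 0: c · ‖z‖^{−1} ≤ ∫_0^∞ ∏_{j=1}^d φ̃(r z_j) dr ≤ C · ‖z‖^{−1}. -/
open MeasureTheory

/-- `φ̃(u) = sin²(u)/u²` for `u ≠ 0`, with `φ̃(0) = 1`. -/
noncomputable def phiTilde (u : ℝ) : ℝ :=
  if u = 0 then 1 else Real.sin u ^ 2 / u ^ 2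

lemma phiTilde_nonneg (u : ℝ) : 0 ≤ phiTilde u := by
  unfold phiTilde
  split_ifs
  · norm_num
  · positivity

lemma phiTilde_le_one (u : ℝ) : phiTilde u ≤ 1 := by
  unfold phiTilde
  split_ifs with h
  · exact le_rfl
  · rw [div_le_one (by positivity)]
    exact Real.sin_sq_le_sq

lemma phiTilde_even (u : ℝ) : phiTilde (-u) = phiTilde u := by
  unfold phiTilde
  simp [neg_eq_zero, Real.sin_neg]

lemma phiTilde_le_inv_sq {u : ℝ} (hu : u ≠ 0) : phiTilde u ≤ (u ^ 2)⁻¹ := by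
  unfold phiTilde
  rw [if_neg hu, div_le_iff₀ (by positivity), inv_mul_cancel₀ (by positivity)]
  nlinarith [Real.neg_one_le_sin u, Real.sin_le_one u]

lemma phiTilde_ge {u : ℝ} (hu : |u| ≤ 1) : (9:ℝ)/16 ≤ phiTilde u := by
  rcases eq_or_ne u 0 with h | h
  · simp [phiTilde, h]; norm_num
  · have hu0 : 0 < |u| := abs_pos.mpr h
    have hsin := Real.sin_gt_sub_cube hu0
    have hcube : |u| ^ 3 ≤ |u| := by
      nlinarith [abs_nonneg u, mul_nonneg (abs_nonneg u) (sub_nonneg.mpr hu),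
        mul_nonneg (mul_nonneg (abs_nonneg u) (abs_nonneg u)) (sub_nonneg.mpr hu)]
    have h34 : (3:ℝ)/4 * |u| ≤ Real.sin |u| := by nlinarith
    have hsq : (9:ℝ)/16 * u ^ 2 ≤ Real.sin u ^ 2 := by
      have h1 : Real.sin |u| ^ 2 = Real.sin u ^ 2 := by
        rcases abs_choice u with h' | h' <;> simp [h', Real.sin_neg]
      nlinarith [abs_nonneg u, sq_abs u]
    unfold phiTilde
    rw [if_neg h, le_div_iff₀ (by positivity)]
    linarith

lemma phiTilde_measurable : Measurable phiTilde := by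
  unfold phiTilde
  exact Measurable.ite (measurableSet_singleton 0) measurable_const
    ((Real.measurable_sin.pow_const 2).div (measurable_id.pow_const 2))

/-- There are constants `0 < c ≤ C` (depending only on `d`) with
`c ‖z‖⁻¹ ≤ ∫_0^∞ ∏_j sin²(r z_j)/(r z_j)² dr ≤ C ‖z‖⁻¹` for all `z ≠ 0`. -/
theorem sinc_product_integral_asymp (d : ℕ) (hd : 1 ≤ d) :
    ∃ c C : ℝ, 0 < c ∧ c ≤ C ∧
      ∀ z : EuclideanSpace ℝ (Fin d), z ≠ 0 →
        (ENNReal.ofReal (c * ‖z‖⁻¹)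
            ≤ ∫⁻ r in Set.Ioi (0 : ℝ), ENNReal.ofReal (∏ j, phiTilde (r * z j))) ∧
        (∫⁻ r in Set.Ioi (0 : ℝ), ENNReal.ofReal (∏ j, phiTilde (r * z j)))
            ≤ ENNReal.ofReal (C * ‖z‖⁻¹) := by
  haveI : Nonempty (Fin d) := Fin.pos_iff_nonempty.mp hd
  have hsd : (1:ℝ) ≤ Real.sqrt d := by
    rw [show (1:ℝ) = Real.sqrt 1 from Real.sqrt_one.symm]
    exact Real.sqrt_le_sqrt (by exact_mod_cast hd)
  refine ⟨((9:ℝ)/16)^d, 2 * Real.sqrt d, by positivity, ?_, ?_⟩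
  · have h1 : ((9:ℝ)/16)^d ≤ 1 := pow_le_one₀ (by norm_num) (by norm_num)
    linarith
  intro z hz
  have hz0 : 0 < ‖z‖ := norm_pos_iff.mpr hz
  have hnorm : ‖z‖ = Real.sqrt (∑ j, z j ^ 2) := by
    rw [EuclideanSpace.norm_eq]
    congr 1
    exact Finset.sum_congr rfl fun j _ => by rw [Real.norm_eq_abs, sq_abs]
  have hcoord : ∀ j, |z j| ≤ ‖z‖ := by
    intro j
    rw [hnorm, ← Real.sqrt_sq_eq_abs]
    exact Real.sqrt_le_sqrt (Finset.single_le_sum (f := fun j => z j ^ 2)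
      (fun i _ => sq_nonneg _) (Finset.mem_univ j))
  constructor
  · -- lower bound
    have hle : ∫⁻ r in Set.Ioc (0:ℝ) ‖z‖⁻¹,
        ENNReal.ofReal (((9:ℝ)/16)^d) ≤
        ∫⁻ r in Set.Ioi (0:ℝ), ENNReal.ofReal (∏ j, phiTilde (r * z j)) := by
      refine le_trans (setLIntegral_mono' measurableSet_Ioc ?_)
        (lintegral_mono_set Set.Ioc_subset_Ioi_self)
      intro r hr
      apply ENNReal.ofReal_le_ofReal
      have : ((9:ℝ)/16)^d = ∏ _j : Fin d, ((9:ℝ)/16) := by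
        rw [Finset.prod_const, Finset.card_univ, Fintype.card_fin]
      rw [this]
      refine Finset.prod_le_prod (fun _ _ => by norm_num) (fun j _ => phiTilde_ge ?_)
      have h1 : |r * z j| = r * |z j| := by
        rw [abs_mul, abs_of_pos hr.1]
      rw [h1]
      calc r * |z j| ≤ ‖z‖⁻¹ * ‖z‖ :=
            mul_le_mul hr.2 (hcoord j) (abs_nonneg _) (by positivity)
        _ = 1 := inv_mul_cancel₀ hz0.ne'
    calc ENNReal.ofReal (((9:ℝ)/16)^d * ‖z‖⁻¹)
        = ENNReal.ofReal (((9:ℝ)/16)^d) * ENNReal.ofReal ‖z‖⁻¹ :=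
          ENNReal.ofReal_mul (by positivity)
      _ = ∫⁻ _r in Set.Ioc (0:ℝ) ‖z‖⁻¹, ENNReal.ofReal (((9:ℝ)/16)^d) := by
          rw [setLIntegral_const, Real.volume_Ioc, sub_zero]
      _ ≤ _ := hle
  · -- upper bound
    obtain ⟨j0, -, hj0⟩ := Finset.exists_max_image Finset.univ (fun j => |z j|)
      Finset.univ_nonempty
    set b := |z j0| with hbdef
    have hzb : ‖z‖ ≤ Real.sqrt d * b := by
      have hsum : (∑ j, z j ^ 2) ≤ d * b ^ 2 := by
        calc (∑ j, z j ^ 2) ≤ ∑ _j : Fin d, b ^ 2 := by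
              refine Finset.sum_le_sum (fun j _ => ?_)
              have := hj0 j (Finset.mem_univ j)
              nlinarith [abs_nonneg (z j), sq_abs (z j)]
          _ = d * b ^ 2 := by
              rw [Finset.sum_const, Finset.card_univ, Fintype.card_fin, nsmul_eq_mul]
      rw [hnorm]
      calc Real.sqrt (∑ j, z j ^ 2) ≤ Real.sqrt (d * b ^ 2) := Real.sqrt_le_sqrt hsum
        _ = Real.sqrt d * b := by
            rw [Real.sqrt_mul (Nat.cast_nonneg d), Real.sqrt_sq_eq_abs, abs_abs]
    have hb : 0 < b := by
      by_contra h
      push_neg at h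
      have hb0 : b = 0 := le_antisymm h (abs_nonneg _)
      rw [hb0, mul_zero] at hzb
      linarith
    have hbinv : 0 < b⁻¹ := inv_pos.mpr hb
    -- pointwise bound
    have hpt : ∀ r ∈ Set.Ioi (0:ℝ),
        ENNReal.ofReal (∏ j, phiTilde (r * z j)) ≤
        ENNReal.ofReal (min 1 (((r * b) ^ 2)⁻¹)) := by
      intro r hr
      apply ENNReal.ofReal_le_ofReal
      have hprod : (∏ j, phiTilde (r * z j)) ≤ phiTilde (r * z j0) := by
        calc (∏ j, phiTilde (r * z j))
            = phiTilde (r * z j0) * ∏ j ∈ Finset.univ.erase j0, phiTilde (r * z j) :=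
              (Finset.mul_prod_erase _ _ (Finset.mem_univ j0)).symm
          _ ≤ phiTilde (r * z j0) * 1 := by
              refine mul_le_mul_of_nonneg_left ?_ (phiTilde_nonneg _)
              exact Finset.prod_le_one (fun _ _ => phiTilde_nonneg _)
                (fun _ _ => phiTilde_le_one _)
          _ = phiTilde (r * z j0) := mul_one _
      have heq : phiTilde (r * z j0) = phiTilde (r * b) := by
        rcases abs_choice (z j0) with h' | h'
        · rw [hbdef, h']
        · rw [hbdef, h', mul_neg, phiTilde_even]
      have hr0 : (0:ℝ) < r := hr
      have hrb : r * b ≠ 0 := (mul_pos hr0 hb).ne'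
      refine le_trans hprod ?_
      rw [heq]
      exact le_min (phiTilde_le_one _) (phiTilde_le_inv_sq hrb)
    have hsplit : Set.Ioc (0:ℝ) b⁻¹ ∪ Set.Ioi b⁻¹ = Set.Ioi (0:ℝ) :=
      Set.Ioc_union_Ioi_eq_Ioi hbinv.le
    have hpiece1 : ∫⁻ r in Set.Ioc (0:ℝ) b⁻¹,
        ENNReal.ofReal (min 1 (((r * b) ^ 2)⁻¹)) ≤ ENNReal.ofReal b⁻¹ := by
      calc ∫⁻ r in Set.Ioc (0:ℝ) b⁻¹, ENNReal.ofReal (min 1 (((r * b) ^ 2)⁻¹))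
          ≤ ∫⁻ _r in Set.Ioc (0:ℝ) b⁻¹, (1:ENNReal) := by
            refine setLIntegral_mono' measurableSet_Ioc (fun r _ => ?_)
            calc ENNReal.ofReal (min 1 (((r * b) ^ 2)⁻¹))
                ≤ ENNReal.ofReal 1 := ENNReal.ofReal_le_ofReal (min_le_left _ _)
              _ = 1 := ENNReal.ofReal_one
        _ = ENNReal.ofReal b⁻¹ := by
            rw [setLIntegral_const, Real.volume_Ioc, sub_zero, one_mul]
    have hint : IntegrableOn (fun r : ℝ => ((r * b) ^ 2)⁻¹) (Set.Ioi b⁻¹) := by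
      have h1 : IntegrableOn (fun r : ℝ => b⁻¹ ^ 2 * r ^ (-2:ℝ)) (Set.Ioi b⁻¹) := by
        exact (integrableOn_Ioi_rpow_of_lt (by norm_num) hbinv).const_mul _
      refine h1.congr_fun (fun r hr => ?_) measurableSet_Ioi
      have hr0 : 0 < r := lt_trans hbinv hr
      beta_reduce
      rw [Real.rpow_neg hr0.le, show (2:ℝ) = ((2:ℕ):ℝ) by norm_cast, Real.rpow_natCast]
      rw [mul_pow, mul_inv, inv_pow]
      ring
    have hval : ∫ r in Set.Ioi b⁻¹, ((r * b) ^ 2)⁻¹ = b⁻¹ := by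
      have h1 : ∫ r in Set.Ioi b⁻¹, ((r * b) ^ 2)⁻¹
          = ∫ r in Set.Ioi b⁻¹, b⁻¹ ^ 2 * r ^ (-2:ℝ) := by
        refine setIntegral_congr_fun measurableSet_Ioi (fun r hr => ?_)
        have hr0 : 0 < r := lt_trans hbinv hr
        rw [Real.rpow_neg hr0.le, show (2:ℝ) = ((2:ℕ):ℝ) by norm_cast, Real.rpow_natCast]
        rw [mul_pow, mul_inv, inv_pow]
        ring
      rw [h1, integral_const_mul, integral_Ioi_rpow_of_lt (by norm_num) hbinv]
      rw [show (-2:ℝ) + 1 = -1 by norm_num, Real.rpow_neg_one, inv_inv]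
      field_simp
    have hpiece2 : ∫⁻ r in Set.Ioi b⁻¹,
        ENNReal.ofReal (min 1 (((r * b) ^ 2)⁻¹)) ≤ ENNReal.ofReal b⁻¹ := by
      calc ∫⁻ r in Set.Ioi b⁻¹, ENNReal.ofReal (min 1 (((r * b) ^ 2)⁻¹))
          ≤ ∫⁻ r in Set.Ioi b⁻¹, ENNReal.ofReal (((r * b) ^ 2)⁻¹) :=
            setLIntegral_mono' measurableSet_Ioi
              (fun r _ => ENNReal.ofReal_le_ofReal (min_le_right _ _))
        _ = ENNReal.ofReal (∫ r in Set.Ioi b⁻¹, ((r * b) ^ 2)⁻¹) :=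
            (ofReal_integral_eq_lintegral_ofReal hint
              (Filter.Eventually.of_forall (fun r => by positivity))).symm
        _ = ENNReal.ofReal b⁻¹ := by rw [hval]
    calc ∫⁻ r in Set.Ioi (0:ℝ), ENNReal.ofReal (∏ j, phiTilde (r * z j))
        ≤ ∫⁻ r in Set.Ioi (0:ℝ), ENNReal.ofReal (min 1 (((r * b) ^ 2)⁻¹)) :=
          setLIntegral_mono' measurableSet_Ioi hpt
      _ = (∫⁻ r in Set.Ioc (0:ℝ) b⁻¹, ENNReal.ofReal (min 1 (((r * b) ^ 2)⁻¹)))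
          + ∫⁻ r in Set.Ioi b⁻¹, ENNReal.ofReal (min 1 (((r * b) ^ 2)⁻¹)) := by
          rw [← hsplit, lintegral_union measurableSet_Ioi (Set.Ioc_disjoint_Ioi le_rfl)]
      _ ≤ ENNReal.ofReal b⁻¹ + ENNReal.ofReal b⁻¹ := add_le_add hpiece1 hpiece2
      _ = ENNReal.ofReal (2 * b⁻¹) := by
          rw [← ENNReal.ofReal_add hbinv.le hbinv.le]; ring_nf
      _ ≤ ENNReal.ofReal (2 * Real.sqrt d * ‖z‖⁻¹) := by
          apply ENNReal.ofReal_le_ofReal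
          have key : 1/b ≤ Real.sqrt d / ‖z‖ := by
            rw [div_le_div_iff₀ hb hz0]; linarith
          calc 2 * b⁻¹ = 2 * (1/b) := by rw [one_div]
            _ ≤ 2 * (Real.sqrt d / ‖z‖) := by linarith
            _ = 2 * Real.sqrt d * ‖z‖⁻¹ := by rw [div_eq_mul_inv]; ring
end

section
/- Let d ≥ 1 and fix β with 0 < β < min(2, d). There exists a constant C > 0 such that for all s > 0 and all y ∈ ℝ^d: ∫_{ℝ^d} p_s(x + y) ‖x‖^{−β} dx ≤ C · s^{−β/2}, and moreover if y ≠ 0 then ∫_{ℝ^d} p_s(x + y) ‖x‖^{−β} dx ≤ C · ‖y‖^{−β}. Equivalently, E[ ‖√s Z + y‖^{−β} ] ≤ C ( s^{−β/2} ∧ ‖y‖^{−β} ) where Z is a d-dimensional standard Gaussian vector. -/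
open MeasureTheory

/-- The standard Gaussian heat kernel on `ℝ^d`:
`p_t(x) = (2πt)^{-d/2} exp(-‖x‖²/(2t))`. -/
noncomputable def heatKernel (d : ℕ) (t : ℝ) (x : EuclideanSpace ℝ (Fin d)) : ℝ :=
  (2 * Real.pi * t) ^ (-(d : ℝ) / 2) * Real.exp (-‖x‖ ^ 2 / (2 * t))

section Aux

open Metric Real Set

theorem HK.integrable_gauss (d : ℕ) {b : ℝ} (hb : 0 < b) :
    Integrable (fun v : EuclideanSpace ℝ (Fin d) => Real.exp (- b * ‖v‖^2)) := by
  have h := (GaussianFourier.integrable_cexp_neg_mul_sq_norm_add (V := EuclideanSpace ℝ (Fin d))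
    (b := (b:ℂ)) (by simpa using hb) 0 0).re
  refine h.congr (Filter.Eventually.of_forall fun v => ?_)
  show RCLike.re (Complex.exp _) = _
  have : (-(b:ℂ) * (‖v‖:ℂ)^2 + 0 * ((inner ℝ (0 : EuclideanSpace ℝ (Fin d)) v : ℝ) : ℂ))
      = ((-b * ‖v‖^2 : ℝ) : ℂ) := by push_cast; ring
  rw [this]
  exact Complex.exp_ofReal_re _

theorem HK.lintegral_gauss (d : ℕ) {s : ℝ} (hs : 0 < s) :
    ∫⁻ x : EuclideanSpace ℝ (Fin d), ENNReal.ofReal (Real.exp (-‖x‖ ^ 2 / (2 * s)))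
      = ENNReal.ofReal ((2 * π * s) ^ ((d : ℝ) / 2)) := by
  have hb : (0:ℝ) < (2*s)⁻¹ := by positivity
  have h1 : ∀ x : EuclideanSpace ℝ (Fin d), -‖x‖ ^ 2 / (2 * s) = -(2*s)⁻¹ * ‖x‖^2 := by
    intro x; field_simp
  simp_rw [h1]
  rw [← ofReal_integral_eq_lintegral_ofReal (HK.integrable_gauss d hb)
    (Filter.Eventually.of_forall fun x => (Real.exp_pos _).le),
    GaussianFourier.integral_rexp_neg_mul_sq_norm hb, finrank_euclideanSpace_fin]
  rw [show π / (2 * s)⁻¹ = 2 * π * s by field_simp]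

theorem HK.lintegral_heatKernel (d : ℕ) {s : ℝ} (hs : 0 < s) (y : EuclideanSpace ℝ (Fin d)) :
    ∫⁻ x : EuclideanSpace ℝ (Fin d), ENNReal.ofReal (heatKernel d s (x + y)) = 1 := by
  rw [lintegral_add_right_eq_self (fun x => ENNReal.ofReal (heatKernel d s x)) y]
  unfold heatKernel
  have h2πs : (0:ℝ) < 2 * π * s := by positivity
  have hA : (0:ℝ) ≤ (2 * π * s) ^ (-(d : ℝ) / 2) := (Real.rpow_pos_of_pos h2πs _).le
  simp_rw [ENNReal.ofReal_mul hA]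
  rw [lintegral_const_mul' _ _ ENNReal.ofReal_ne_top, HK.lintegral_gauss d hs,
    ← ENNReal.ofReal_mul hA, ← Real.rpow_add h2πs]
  rw [show -(d:ℝ) / 2 + (d:ℝ) / 2 = 0 by ring, Real.rpow_zero, ENNReal.ofReal_one]

theorem HK.riesz_scaling (d : ℕ) (β : ℝ) {r : ℝ} (hr : 0 < r) :
    ∫⁻ x : EuclideanSpace ℝ (Fin d) in ball 0 r, ENNReal.ofReal (‖x‖ ^ (-β))
      = ENNReal.ofReal (r ^ ((d:ℝ) - β)) *
        ∫⁻ x : EuclideanSpace ℝ (Fin d) in ball 0 1, ENNReal.ofReal (‖x‖ ^ (-β)) := by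
  let E := EuclideanSpace ℝ (Fin d)
  have hmap : Measure.map (r • · : E → E) volume
      = ENNReal.ofReal (|(r ^ Module.finrank ℝ E)⁻¹|) • volume :=
    Measure.map_addHaar_smul volume hr.ne'
  have hh : Measurable ((ball (0:E) r).indicator
      (fun x => ENNReal.ofReal (‖x‖ ^ (-β)))) :=
    ((measurable_norm.pow_const _).ennreal_ofReal).indicator measurableSet_ball
  have key : ∫⁻ x, (ball (0:E) r).indicator (fun x => ENNReal.ofReal (‖x‖ ^ (-β))) x
        ∂(Measure.map (r • · : E → E) volume)
      = ∫⁻ x : E, (ball (0:E) r).indicator (fun x => ENNReal.ofReal (‖x‖ ^ (-β))) (r • x) := by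
    exact lintegral_map hh (measurable_const_smul r)
  rw [hmap] at key
  rw [← lintegral_indicator measurableSet_ball, ← lintegral_indicator measurableSet_ball]
  have hvol : ∫⁻ x : E, (ball (0:E) r).indicator (fun x => ENNReal.ofReal (‖x‖ ^ (-β))) x
      = ENNReal.ofReal (r ^ (d:ℕ)) *
        ∫⁻ x : E, (ball (0:E) r).indicator (fun x => ENNReal.ofReal (‖x‖ ^ (-β))) (r • x) := by
    rw [← key]
    simp only [Measure.smul_apply, lintegral_smul_measure, smul_eq_mul]
    rw [← mul_assoc, ← ENNReal.ofReal_mul (by positivity)]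
    rw [abs_of_pos (by positivity), finrank_euclideanSpace_fin,
      mul_inv_cancel₀ (by positivity), ENNReal.ofReal_one, one_mul]
  rw [hvol]
  have hind : ∀ x : E, (ball (0:E) r).indicator (fun x => ENNReal.ofReal (‖x‖ ^ (-β))) (r • x)
      = ENNReal.ofReal (r ^ (-β)) *
        (ball (0:E) 1).indicator (fun x => ENNReal.ofReal (‖x‖ ^ (-β))) x := by
    intro x
    have hmem : (r • x ∈ ball (0:E) r) ↔ x ∈ ball (0:E) 1 := by
      simp only [mem_ball, dist_zero_right, norm_smul, Real.norm_eq_abs, abs_of_pos hr]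
      constructor
      · intro h; nlinarith [norm_nonneg x]
      · intro h; nlinarith [norm_nonneg x]
    by_cases hx : x ∈ ball (0:E) 1
    · rw [Set.indicator_of_mem (hmem.mpr hx), Set.indicator_of_mem hx]
      rw [norm_smul, Real.norm_eq_abs, abs_of_pos hr,
        Real.mul_rpow hr.le (norm_nonneg x), ENNReal.ofReal_mul (by positivity)]
    · rw [Set.indicator_of_notMem (fun h => hx (hmem.mp h)), Set.indicator_of_notMem hx,
        mul_zero]
  simp_rw [hind]
  rw [lintegral_const_mul' _ _ ENNReal.ofReal_ne_top, ← mul_assoc,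
    ← ENNReal.ofReal_mul (by positivity), ← Real.rpow_natCast r d,
    ← Real.rpow_add hr, sub_eq_add_neg]

theorem HK.riesz_finite (d : ℕ) (hd : 1 ≤ d) (β : ℝ) (hβ0 : 0 < β) (hβd : β < d) :
    ∫⁻ x : EuclideanSpace ℝ (Fin d) in ball 0 1, ENNReal.ofReal (‖x‖ ^ (-β)) < ⊤ := by
  set E := EuclideanSpace ℝ (Fin d)
  haveI : Nonempty (Fin d) := ⟨⟨0, hd⟩⟩
  haveI : Nontrivial E := inferInstance
  set μ := (volume : Measure E).restrict (ball 0 1) with hμ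
  set V := (volume : Measure E) (ball 0 1) with hV
  have hVtop : V < ⊤ := measure_ball_lt_top
  rw [lintegral_eq_lintegral_meas_lt μ
    (Filter.Eventually.of_forall fun x => Real.rpow_nonneg (norm_nonneg x) _)
    (measurable_norm.pow_const _).aemeasurable]
  have hsub : ∀ t : ℝ, 0 < t → {a : E | t < ‖a‖ ^ (-β)} ⊆ ball 0 (t ^ (-(1/β))) := by
    intro t ht a ha
    simp only [mem_setOf_eq] at ha
    have hna : 0 < ‖a‖ := by
      by_contra h
      push_neg at h
      have h0 : ‖a‖ = 0 := le_antisymm h (norm_nonneg a)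
      rw [h0, Real.zero_rpow (by linarith : -β ≠ 0)] at ha
      linarith
    have h1 : (‖a‖ ^ (-β)) ^ (-(1/β)) < t ^ (-(1/β)) :=
      Real.rpow_lt_rpow_of_neg ht ha (neg_neg_iff_pos.mpr (by positivity))
    rwa [← Real.rpow_mul hna.le, show -β * -(1/β) = 1 by field_simp, Real.rpow_one,
      ← dist_zero_right a, ← mem_ball] at h1
  have hsplit : (Ioi (0:ℝ)) = Ioc (0:ℝ) 1 ∪ Ioi (1:ℝ) := (Ioc_union_Ioi_eq_Ioi zero_le_one).symm
  rw [hsplit, lintegral_union measurableSet_Ioi (Ioc_disjoint_Ioi le_rfl)]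
  have hb1 : ∫⁻ t in Ioc (0:ℝ) 1, μ {a : E | t < ‖a‖ ^ (-β)} ≤ V := by
    calc ∫⁻ t in Ioc (0:ℝ) 1, μ {a : E | t < ‖a‖ ^ (-β)}
        ≤ ∫⁻ _ in Ioc (0:ℝ) 1, V := by
          refine setLIntegral_mono measurable_const fun t _ => ?_
          rw [hμ, hV]
          exact (measure_mono (subset_univ _)).trans (by rw [Measure.restrict_apply_univ])
      _ = V * volume (Ioc (0:ℝ) 1) := by rw [setLIntegral_const]
      _ = V := by simp
  have hb2 : ∫⁻ t in Ioi (1:ℝ), μ {a : E | t < ‖a‖ ^ (-β)}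
      ≤ V * ∫⁻ t in Ioi (1:ℝ), ENNReal.ofReal (t ^ (-((d:ℝ)/β))) := by
    rw [← lintegral_const_mul' _ _ hVtop.ne]
    refine setLIntegral_mono (by fun_prop) fun t ht => ?_
    have ht1 : (1:ℝ) < t := ht
    have ht0 : (0:ℝ) < t := lt_trans zero_lt_one ht1
    calc μ {a : E | t < ‖a‖ ^ (-β)}
        ≤ μ (ball 0 (t ^ (-(1/β)))) := measure_mono (hsub t ht0)
      _ ≤ (volume : Measure E) (ball 0 (t ^ (-(1/β)))) := Measure.restrict_le_self _
      _ = ENNReal.ofReal ((t ^ (-(1/β))) ^ (d : ℕ)) * V := by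
          rw [Measure.addHaar_ball _ _ (by positivity), finrank_euclideanSpace_fin]
      _ = V * ENNReal.ofReal (t ^ (-((d:ℝ)/β))) := by
          rw [mul_comm]
          congr 2
          rw [← Real.rpow_natCast (t ^ (-(1/β))) d, ← Real.rpow_mul ht0.le]
          congr 1
          field_simp
  have hfin : ∫⁻ t in Ioi (1:ℝ), ENNReal.ofReal (t ^ (-((d:ℝ)/β))) < ⊤ := by
    have hint : IntegrableOn (fun t : ℝ => t ^ (-((d:ℝ)/β))) (Ioi 1) :=
      integrableOn_Ioi_rpow_of_lt (by
        rw [neg_lt_neg_iff, lt_div_iff₀ hβ0, one_mul]; exact hβd) zero_lt_one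
    have h2 := hint.2
    rw [hasFiniteIntegral_iff_norm] at h2
    refine lt_of_le_of_lt (setLIntegral_mono (by fun_prop) fun t ht => ?_) h2
    exact ENNReal.ofReal_le_ofReal (le_abs_self _)
  have hmul : V * ∫⁻ t in Ioi (1:ℝ), ENNReal.ofReal (t ^ (-((d:ℝ)/β))) < ⊤ :=
    ENNReal.mul_lt_top hVtop hfin
  calc _ ≤ V + V * ∫⁻ t in Ioi (1:ℝ), ENNReal.ofReal (t ^ (-((d:ℝ)/β))) := add_le_add hb1 hb2
    _ < ⊤ := ENNReal.add_lt_top.mpr ⟨hVtop, hmul⟩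

theorem HK.tail_bound (d : ℕ) {t : ℝ} (ht : 0 < t) :
    t ^ ((d:ℝ)/2) * Real.exp (-t/8) ≤ 1 + (d.factorial : ℝ) * 8 ^ d := by
  have hF : (0:ℝ) ≤ (d.factorial : ℝ) * 8 ^ d := by positivity
  rcases le_or_gt t 1 with h1 | h1
  · have h2 : t ^ ((d:ℝ)/2) ≤ 1 := Real.rpow_le_one ht.le h1 (by positivity)
    have h3 : Real.exp (-t/8) ≤ 1 := Real.exp_le_one_iff.mpr (by linarith)
    nlinarith [Real.exp_pos (-t/8), Real.rpow_nonneg ht.le ((d:ℝ)/2)]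
  · have h2 : t ^ ((d:ℝ)/2) ≤ t ^ (d:ℕ) := by
      rw [← Real.rpow_natCast t d]
      exact Real.rpow_le_rpow_of_exponent_le h1.le (by
        rw [div_le_iff₀ (by norm_num : (0:ℝ) < 2)]
        nlinarith [Nat.cast_nonneg (α := ℝ) d])
    have he : (t/8) ^ d / (d.factorial : ℝ) ≤ Real.exp (t/8) := by
      calc (t/8) ^ d / (d.factorial : ℝ)
          ≤ ∑ i ∈ Finset.range (d+1), (t/8) ^ i / (i.factorial : ℝ) := by
            exact Finset.single_le_sum (f := fun i => (t/8)^i / (i.factorial : ℝ))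
              (fun i _ => by positivity) (Finset.self_mem_range_succ d)
        _ ≤ Real.exp (t/8) := Real.sum_le_exp_of_nonneg (by positivity) _
    have hpos : (0:ℝ) < (t/8) ^ d / (d.factorial : ℝ) := by positivity
    have h3 : t ^ (d:ℕ) * Real.exp (-t/8) ≤ (d.factorial : ℝ) * 8 ^ d := by
      rw [show -t/8 = -(t/8) by ring, Real.exp_neg, ← div_eq_mul_inv]
      calc t ^ (d:ℕ) / Real.exp (t/8)
          ≤ t ^ (d:ℕ) / ((t/8) ^ d / (d.factorial : ℝ)) := by
            exact div_le_div_of_nonneg_left (by positivity) hpos he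
        _ = (d.factorial : ℝ) * 8 ^ d := by
            rw [div_pow]
            field_simp
    have h4 : t ^ ((d:ℝ)/2) * Real.exp (-t/8) ≤ t ^ (d:ℕ) * Real.exp (-t/8) :=
      mul_le_mul_of_nonneg_right h2 (Real.exp_pos _).le
    linarith

theorem HK.heatKernel_measurable (d : ℕ) (s : ℝ) (y : EuclideanSpace ℝ (Fin d)) :
    Measurable (fun x : EuclideanSpace ℝ (Fin d) => heatKernel d s (x + y)) := by
  unfold heatKernel
  fun_prop

set_option maxHeartbeats 1000000 in
theorem HK.master_bound (d : ℕ) {β : ℝ} (hβ0 : 0 < β) {s : ℝ} (hs : 0 < s)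
    (y : EuclideanSpace ℝ (Fin d)) {r M : ℝ} (hr : 0 < r) (hM0 : 0 ≤ M)
    (hM : ∀ x : EuclideanSpace ℝ (Fin d), x ∈ ball (0 : EuclideanSpace ℝ (Fin d)) r →
      Real.exp (-‖x + y‖ ^ 2 / (2 * s)) ≤ M) :
    ∫⁻ x, ENNReal.ofReal (heatKernel d s (x + y) * ‖x‖ ^ (-β))
      ≤ ENNReal.ofReal ((2 * π * s) ^ (-(d:ℝ)/2) * M * r ^ ((d:ℝ) - β)) *
          (∫⁻ x : EuclideanSpace ℝ (Fin d) in ball 0 1, ENNReal.ofReal (‖x‖ ^ (-β)))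
        + ENNReal.ofReal (r ^ (-β)) := by
  let E := EuclideanSpace ℝ (Fin d)
  have h2πs : (0:ℝ) < 2 * π * s := by positivity
  set A : ℝ := (2 * π * s) ^ (-(d:ℝ)/2) with hA
  have hA0 : 0 < A := Real.rpow_pos_of_pos h2πs _
  have hkn : ∀ x : E, 0 ≤ heatKernel d s (x + y) := fun x =>
    mul_nonneg hA0.le (Real.exp_pos _).le
  rw [← lintegral_add_compl _ (measurableSet_ball (x := (0:E)) (ε := r))]
  refine add_le_add ?_ ?_
  · calc _ ≤ ∫⁻ x in ball (0:E) r,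
            ENNReal.ofReal (A * M) * ENNReal.ofReal (‖x‖ ^ (-β)) := by
          refine setLIntegral_mono
            (measurable_const.mul ((measurable_norm.pow_const _).ennreal_ofReal)) fun x hx => ?_
          rw [← ENNReal.ofReal_mul (by positivity)]
          refine ENNReal.ofReal_le_ofReal ?_
          refine mul_le_mul_of_nonneg_right ?_ (Real.rpow_nonneg (norm_nonneg x) _)
          exact mul_le_mul_of_nonneg_left (hM x hx) hA0.le
      _ = ENNReal.ofReal (A * M) *
            ∫⁻ x in ball (0:E) r, ENNReal.ofReal (‖x‖ ^ (-β)) :=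
          lintegral_const_mul' _ _ ENNReal.ofReal_ne_top
      _ = ENNReal.ofReal (A * M * r ^ ((d:ℝ) - β)) *
            ∫⁻ x in ball (0:E) 1, ENNReal.ofReal (‖x‖ ^ (-β)) := by
          rw [HK.riesz_scaling d β hr, ← mul_assoc, ← ENNReal.ofReal_mul (by positivity)]
  · calc _ ≤ ∫⁻ x in (ball (0:E) r)ᶜ,
            ENNReal.ofReal (r ^ (-β)) * ENNReal.ofReal (heatKernel d s (x + y)) := by
          refine setLIntegral_mono
            (measurable_const.mul (HK.heatKernel_measurable d s y).ennreal_ofReal) fun x hx => ?_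
          rw [← ENNReal.ofReal_mul (by positivity)]
          refine ENNReal.ofReal_le_ofReal ?_
          have hxr : r ≤ ‖x‖ := by
            simp only [mem_compl_iff, mem_ball, dist_zero_right, not_lt] at hx
            exact hx
          have hle : ‖x‖ ^ (-β) ≤ r ^ (-β) :=
            Real.rpow_le_rpow_of_nonpos hr hxr (by linarith [hβ0] : -β ≤ 0)
          rw [mul_comm (r ^ (-β))]
          exact mul_le_mul_of_nonneg_left hle (hkn x)
      _ ≤ ∫⁻ x : E, ENNReal.ofReal (r ^ (-β)) * ENNReal.ofReal (heatKernel d s (x + y)) :=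
          setLIntegral_le_lintegral _ _
      _ = ENNReal.ofReal (r ^ (-β)) * ∫⁻ x : E, ENNReal.ofReal (heatKernel d s (x + y)) :=
          lintegral_const_mul' _ _ ENNReal.ofReal_ne_top
      _ = ENNReal.ofReal (r ^ (-β)) := by rw [HK.lintegral_heatKernel d hs y, mul_one]

end Aux

/-- For `0 < β < min(2,d)` there is `C > 0` with
`∫ p_s(x+y) ‖x‖^{-β} dx ≤ C s^{-β/2}` and, for `y ≠ 0`,
`∫ p_s(x+y) ‖x‖^{-β} dx ≤ C ‖y‖^{-β}`. -/
theorem heatKernel_riesz_bound (d : ℕ) (hd : 1 ≤ d) (β : ℝ) (hβ0 : 0 < β)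
    (hβ : β < min 2 (d : ℝ)) :
    ∃ C : ℝ, 0 < C ∧
      ∀ s : ℝ, 0 < s → ∀ y : EuclideanSpace ℝ (Fin d),
        ((∫⁻ x, ENNReal.ofReal (heatKernel d s (x + y) * ‖x‖ ^ (-β)))
            ≤ ENNReal.ofReal (C * s ^ (-β / 2))) ∧
        (y ≠ 0 →
          (∫⁻ x, ENNReal.ofReal (heatKernel d s (x + y) * ‖x‖ ^ (-β)))
            ≤ ENNReal.ofReal (C * ‖y‖ ^ (-β))) := by
  have hβ2 : β < 2 := lt_of_lt_of_le hβ (min_le_left _ _)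
  have hβd : β < (d:ℝ) := lt_of_lt_of_le hβ (min_le_right _ _)
  have hπ : (0:ℝ) < Real.pi := Real.pi_pos
  set K := ∫⁻ x : EuclideanSpace ℝ (Fin d) in Metric.ball 0 1, ENNReal.ofReal (‖x‖ ^ (-β))
    with hKdef
  have hKtop : K ≠ ⊤ := (HK.riesz_finite d hd β hβ0 hβd).ne
  set Kr : ℝ := K.toReal with hKrdef
  have hKr : K = ENNReal.ofReal Kr := (ENNReal.ofReal_toReal hKtop).symm
  have hKr0 : 0 ≤ Kr := ENNReal.toReal_nonneg
  set F : ℝ := (d.factorial : ℝ) * 8 ^ d with hFdef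
  have hF0 : (0:ℝ) ≤ F := by positivity
  set P : ℝ := (2 * Real.pi) ^ (-(d:ℝ)/2) with hPdef
  have hP0 : (0:ℝ) < P := Real.rpow_pos_of_pos (by positivity) _
  refine ⟨P * Kr * (1 + F) + 4, ?_, ?_⟩
  · have h1 : (0:ℝ) ≤ P * Kr * (1 + F) := by positivity
    linarith
  intro s hs y
  have e1 : (2 * Real.pi * s) ^ (-(d:ℝ)/2) = P * s ^ (-(d:ℝ)/2) := by
    rw [hPdef, ← Real.mul_rpow (by positivity) hs.le]
  constructor
  · -- first bound
    have hr : (0:ℝ) < s ^ ((1:ℝ)/2) := Real.rpow_pos_of_pos hs _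
    have hM : ∀ x : EuclideanSpace ℝ (Fin d),
        x ∈ Metric.ball (0 : EuclideanSpace ℝ (Fin d)) (s ^ ((1:ℝ)/2)) →
        Real.exp (-‖x + y‖ ^ 2 / (2 * s)) ≤ 1 := by
      intro x _
      refine Real.exp_le_one_iff.mpr ?_
      have h1 : (0:ℝ) ≤ ‖x + y‖ ^ 2 := sq_nonneg _
      have h2 : (0:ℝ) < 2 * s := by positivity
      exact div_nonpos_of_nonpos_of_nonneg (by linarith) h2.le
    refine le_trans (HK.master_bound d hβ0 hs y hr zero_le_one hM) ?_
    rw [← hKdef, hKr, ← ENNReal.ofReal_mul (by positivity),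
      ← ENNReal.ofReal_add (by positivity) (by positivity)]
    refine ENNReal.ofReal_le_ofReal ?_
    have e2 : (s ^ ((1:ℝ)/2)) ^ ((d:ℝ) - β) = s ^ ((1:ℝ)/2 * ((d:ℝ) - β)) :=
      (Real.rpow_mul hs.le _ _).symm
    have e3 : (s ^ ((1:ℝ)/2)) ^ (-β) = s ^ (-β/2) := by
      rw [← Real.rpow_mul hs.le]
      congr 1; ring
    have e4 : s ^ (-(d:ℝ)/2) * s ^ ((1:ℝ)/2 * ((d:ℝ) - β)) = s ^ (-β/2) := by
      rw [← Real.rpow_add hs]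
      congr 1; ring
    calc (2 * Real.pi * s) ^ (-(d:ℝ)/2) * 1 * (s ^ ((1:ℝ)/2)) ^ ((d:ℝ) - β) * Kr
          + (s ^ ((1:ℝ)/2)) ^ (-β)
        = P * Kr * (s ^ (-(d:ℝ)/2) * s ^ ((1:ℝ)/2 * ((d:ℝ) - β))) + s ^ (-β/2) := by
          rw [e1, e2, e3]; ring
      _ = (P * Kr + 1) * s ^ (-β/2) := by rw [e4]; ring
      _ ≤ (P * Kr * (1 + F) + 4) * s ^ (-β/2) := by
          refine mul_le_mul_of_nonneg_right ?_ (Real.rpow_nonneg hs.le _)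
          nlinarith [mul_nonneg (mul_nonneg hP0.le hKr0) hF0]
  · -- second bound
    intro hy
    have hn : (0:ℝ) < ‖y‖ := norm_pos_iff.mpr hy
    have hr : (0:ℝ) < ‖y‖ / 2 := by positivity
    have hM0 : (0:ℝ) ≤ Real.exp (-‖y‖^2 / (8 * s)) := (Real.exp_pos _).le
    have hM : ∀ x : EuclideanSpace ℝ (Fin d),
        x ∈ Metric.ball (0 : EuclideanSpace ℝ (Fin d)) (‖y‖ / 2) →
        Real.exp (-‖x + y‖ ^ 2 / (2 * s)) ≤ Real.exp (-‖y‖^2 / (8 * s)) := by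
      intro x hx
      rw [Metric.mem_ball, dist_zero_right] at hx
      have h1 : ‖y‖ / 2 ≤ ‖x + y‖ := by
        have h2 : ‖y‖ ≤ ‖x + y‖ + ‖x‖ := by
          calc ‖y‖ = ‖(x + y) - x‖ := by congr 1; abel
            _ ≤ ‖x + y‖ + ‖x‖ := norm_sub_le _ _
        linarith
      refine Real.exp_le_exp.mpr ?_
      rw [div_le_div_iff₀ (by positivity) (by positivity)]
      have h3 : (‖y‖/2)^2 ≤ ‖x + y‖^2 := pow_le_pow_left₀ (by positivity) h1 2
      nlinarith [hs.le]
    refine le_trans (HK.master_bound d hβ0 hs y hr hM0 hM) ?_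
    rw [← hKdef, hKr, ← ENNReal.ofReal_mul (by positivity),
      ← ENNReal.ofReal_add (by positivity) (by positivity)]
    refine ENNReal.ofReal_le_ofReal ?_
    set t : ℝ := ‖y‖^2 / s with htdef
    have ht : 0 < t := by positivity
    have key1 : s ^ (-(d:ℝ)/2) * Real.exp (-‖y‖^2 / (8 * s)) ≤ (1 + F) * ‖y‖ ^ (-(d:ℝ)) := by
      have ha : t ^ ((d:ℝ)/2) = ‖y‖ ^ ((d:ℝ)) * s ^ (-(d:ℝ)/2) := by
        rw [htdef, Real.div_rpow (by positivity) hs.le, ← Real.rpow_natCast ‖y‖ 2,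
          ← Real.rpow_mul hn.le, show ((2:ℕ):ℝ) * ((d:ℝ)/2) = (d:ℝ) by push_cast; ring,
          show -(d:ℝ)/2 = -((d:ℝ)/2) by ring, Real.rpow_neg hs.le, div_eq_mul_inv]
      have hb : Real.exp (-‖y‖^2 / (8 * s)) = Real.exp (-t/8) := by
        congr 1
        rw [htdef]; field_simp
      have hc : s ^ (-(d:ℝ)/2) = t ^ ((d:ℝ)/2) * ‖y‖ ^ (-(d:ℝ)) := by
        rw [ha, mul_right_comm, ← Real.rpow_add hn]
        simp
      rw [hb, hc, mul_assoc, mul_comm (‖y‖ ^ (-(d:ℝ))), ← mul_assoc]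
      refine mul_le_mul_of_nonneg_right (HK.tail_bound d ht) (Real.rpow_nonneg hn.le _)
    have key2 : (‖y‖ / 2) ^ ((d:ℝ) - β) ≤ ‖y‖ ^ ((d:ℝ) - β) :=
      Real.rpow_le_rpow (by positivity) (by linarith) (by linarith)
    have key3 : ‖y‖ ^ (-(d:ℝ)) * ‖y‖ ^ ((d:ℝ) - β) = ‖y‖ ^ (-β) := by
      rw [← Real.rpow_add hn]
      congr 1; ring
    have key4 : (‖y‖ / 2) ^ (-β) ≤ 4 * ‖y‖ ^ (-β) := by
      have h24 : (2:ℝ) ^ β ≤ 4 := by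
        calc (2:ℝ) ^ β ≤ (2:ℝ) ^ (2:ℝ) :=
              Real.rpow_le_rpow_of_exponent_le one_le_two hβ2.le
          _ = 4 := by
              rw [show (2:ℝ) = ((2:ℕ):ℝ) by norm_num, Real.rpow_natCast]
              norm_num
      rw [Real.div_rpow hn.le (by norm_num), Real.rpow_neg (by norm_num : (0:ℝ) ≤ 2),
        div_inv_eq_mul]
      calc ‖y‖ ^ (-β) * 2 ^ β ≤ ‖y‖ ^ (-β) * 4 :=
            mul_le_mul_of_nonneg_left h24 (Real.rpow_nonneg hn.le _)
        _ = 4 * ‖y‖ ^ (-β) := mul_comm _ _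
    have t1 : s ^ (-(d:ℝ)/2) * Real.exp (-‖y‖^2 / (8 * s)) * (‖y‖ / 2) ^ ((d:ℝ) - β)
        ≤ ((1 + F) * ‖y‖ ^ (-(d:ℝ))) * ‖y‖ ^ ((d:ℝ) - β) :=
      mul_le_mul key1 key2 (by positivity) (by positivity)
    have t2 : ((1 + F) * ‖y‖ ^ (-(d:ℝ))) * ‖y‖ ^ ((d:ℝ) - β) = (1 + F) * ‖y‖ ^ (-β) := by
      rw [mul_assoc, key3]
    rw [t2] at t1
    calc (2 * Real.pi * s) ^ (-(d:ℝ)/2) * Real.exp (-‖y‖^2 / (8 * s))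
          * (‖y‖ / 2) ^ ((d:ℝ) - β) * Kr + (‖y‖ / 2) ^ (-β)
        = P * Kr * (s ^ (-(d:ℝ)/2) * Real.exp (-‖y‖^2 / (8 * s)) * (‖y‖ / 2) ^ ((d:ℝ) - β))
            + (‖y‖ / 2) ^ (-β) := by rw [e1]; ring
      _ ≤ P * Kr * ((1 + F) * ‖y‖ ^ (-β)) + 4 * ‖y‖ ^ (-β) := by
          refine add_le_add (mul_le_mul_of_nonneg_left t1 (by positivity)) key4
      _ = (P * Kr * (1 + F) + 4) * ‖y‖ ^ (-β) := by ring
end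

section
/- Fix β with 1 < β < 2. Then the following supremum is finite: sup over N ≥ e of ∫_{[0,N²]²} ds₁ ds₂ [ min( (s₁(1−s₁/N²))^{−β/2} , s₁^{−β} ) ] · [ min( (s₂(1−s₂/N²))^{−β/2} , s₂^{−β} ) ] · (1/(2s₁) + 1/(2s₂))^{β−1} · ∫_0^1 λ^{−β/2} min( (1/(2s₁)+1/(2s₂))^{−β/2} (1−λ)^{−β/2} , λ^{−β/2} ) dλ < ∞. -/
open MeasureTheory

open Set ENNReal

private lemma min_le_geom {x y t : ℝ} (hx : 0 ≤ x) (hy : 0 ≤ y) (ht : 0 ≤ t) (ht1 : t ≤ 1) :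
    min x y ≤ x ^ t * y ^ (1 - t) := by
  have hR : 0 ≤ x ^ t * y ^ (1 - t) :=
    mul_nonneg (Real.rpow_nonneg hx _) (Real.rpow_nonneg hy _)
  rcases hx.eq_or_lt with h0 | hx'
  · exact ((min_le_left x y).trans h0.symm.le).trans hR
  rcases hy.eq_or_lt with h0 | hy'
  · exact ((min_le_right x y).trans h0.symm.le).trans hR
  have hm : 0 < min x y := lt_min hx' hy'
  calc min x y = min x y ^ t * min x y ^ (1 - t) := by
        rw [← Real.rpow_add hm]; norm_num
  _ ≤ x ^ t * y ^ (1 - t) :=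
      mul_le_mul (Real.rpow_le_rpow hm.le (min_le_left _ _) ht)
        (Real.rpow_le_rpow hm.le (min_le_right _ _) (by linarith))
        (Real.rpow_nonneg hm.le _) (Real.rpow_nonneg hx _)

private lemma lint_rpow_Ioc {p : ℝ} (hp : -1 < p) :
    ∫⁻ x in Set.Ioc (0:ℝ) 1, ENNReal.ofReal (x ^ p) < ⊤ := by
  have h : IntegrableOn (fun x : ℝ => x ^ p) (Set.Ioc 0 1) := by
    rw [← intervalIntegrable_iff_integrableOn_Ioc_of_le zero_le_one]
    exact intervalIntegral.intervalIntegrable_rpow' hp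
  exact h.lintegral_lt_top

private lemma lint_rpow_Ioi {p : ℝ} (hp : p < -1) :
    ∫⁻ x in Set.Ioi (1:ℝ), ENNReal.ofReal (x ^ p) < ⊤ :=
  ((integrableOn_Ioi_rpow_iff zero_lt_one).mpr hp).lintegral_lt_top

private lemma lint_one_sub_rpow {r : ℝ} (hr : -1 < r) :
    ∫⁻ x in Set.Ioc (1/2 : ℝ) 1, ENNReal.ofReal ((1 - x) ^ r) < ⊤ := by
  have h0 : IntervalIntegrable (fun x : ℝ => x ^ r) volume 0 (1/2) :=
    intervalIntegral.intervalIntegrable_rpow' hr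
  have h : IntervalIntegrable (fun x : ℝ => (1 - x) ^ r) volume (1/2) 1 := by
    have := h0.comp_sub_left 1
    norm_num at this
    exact this.symm
  exact ((intervalIntegrable_iff_integrableOn_Ioc_of_le (by norm_num)).mp h).lintegral_lt_top

private lemma lint_beta {q r : ℝ} (hq0 : 0 ≤ q) (hq1 : q < 1) (hr0 : 0 ≤ r) (hr1 : r < 1) :
    ∫⁻ x in Set.Icc (0:ℝ) 1, ENNReal.ofReal (x ^ (-q) * (1 - x) ^ (-r)) < ⊤ := by
  rw [setLIntegral_congr ((Ioc_ae_eq_Icc (μ := (volume : Measure ℝ)) (a := 0) (b := 1)).symm)]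
  rw [show Set.Ioc (0:ℝ) 1 = Set.Ioc 0 (1/2) ∪ Set.Ioc (1/2) 1 from
      (Set.Ioc_union_Ioc_eq_Ioc (by norm_num) (by norm_num)).symm,
    lintegral_union measurableSet_Ioc (Set.Ioc_disjoint_Ioc_of_le le_rfl)]
  refine ENNReal.add_lt_top.mpr ⟨?_, ?_⟩
  · calc ∫⁻ x in Set.Ioc (0:ℝ) (1/2), ENNReal.ofReal (x ^ (-q) * (1 - x) ^ (-r))
        ≤ ∫⁻ x in Set.Ioc (0:ℝ) (1/2), ENNReal.ofReal ((2:ℝ) ^ r) * ENNReal.ofReal (x ^ (-q)) := by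
          refine setLIntegral_mono' measurableSet_Ioc fun x hx => ?_
          rw [← ENNReal.ofReal_mul (by positivity)]
          refine ENNReal.ofReal_le_ofReal ?_
          rw [mul_comm ((2:ℝ) ^ r) _]
          refine mul_le_mul_of_nonneg_left ?_ (Real.rpow_nonneg hx.1.le _)
          calc (1 - x) ^ (-r) ≤ ((1:ℝ)/2) ^ (-r) :=
                Real.rpow_le_rpow_of_nonpos (by norm_num) (by linarith [hx.2]) (by linarith)
          _ = 2 ^ r := by
                rw [one_div, Real.inv_rpow (by norm_num), Real.rpow_neg (by norm_num), inv_inv]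
    _ = ENNReal.ofReal ((2:ℝ) ^ r) * ∫⁻ x in Set.Ioc (0:ℝ) (1/2), ENNReal.ofReal (x ^ (-q)) :=
        lintegral_const_mul' _ _ ENNReal.ofReal_ne_top
    _ ≤ ENNReal.ofReal ((2:ℝ) ^ r) * ∫⁻ x in Set.Ioc (0:ℝ) 1, ENNReal.ofReal (x ^ (-q)) := by
        gcongr
        norm_num
    _ < ⊤ := ENNReal.mul_lt_top ENNReal.ofReal_lt_top (lint_rpow_Ioc (by linarith))
  · calc ∫⁻ x in Set.Ioc (1/2:ℝ) 1, ENNReal.ofReal (x ^ (-q) * (1 - x) ^ (-r))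
        ≤ ∫⁻ x in Set.Ioc (1/2:ℝ) 1, ENNReal.ofReal ((2:ℝ) ^ q) * ENNReal.ofReal ((1 - x) ^ (-r)) := by
          refine setLIntegral_mono' measurableSet_Ioc fun x hx => ?_
          rw [← ENNReal.ofReal_mul (by positivity)]
          refine ENNReal.ofReal_le_ofReal ?_
          have h1x : 0 ≤ 1 - x := by linarith [hx.2]
          refine mul_le_mul_of_nonneg_right ?_ (Real.rpow_nonneg h1x _)
          calc x ^ (-q) ≤ ((1:ℝ)/2) ^ (-q) :=
                Real.rpow_le_rpow_of_nonpos (by norm_num) hx.1.le (by linarith)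
          _ = 2 ^ q := by
                rw [one_div, Real.inv_rpow (by norm_num), Real.rpow_neg (by norm_num), inv_inv]
    _ = ENNReal.ofReal ((2:ℝ) ^ q) * ∫⁻ x in Set.Ioc (1/2:ℝ) 1, ENNReal.ofReal ((1 - x) ^ (-r)) :=
        lintegral_const_mul' _ _ ENNReal.ofReal_ne_top
    _ < ⊤ := ENNReal.mul_lt_top ENNReal.ofReal_lt_top (lint_one_sub_rpow (by linarith))

private lemma s_int_bound {β a : ℝ} (hβ1 : 1 < β) (hβ2 : β < 2) (ha : 0 < a)
    {N : ℝ} (hN : Real.exp 1 ≤ N) :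
    ∫⁻ s in Set.Ioo (0:ℝ) (N^2),
        ENNReal.ofReal (min ((s * (1 - s / N ^ 2)) ^ (-(β/2))) (s ^ (-β)) * (2*s) ^ a)
      ≤ ENNReal.ofReal ((2:ℝ) ^ (β/2) * 2 ^ a) *
          (∫⁻ s in Set.Ioc (0:ℝ) 1, ENNReal.ofReal (s ^ (a - β/2)))
        + ENNReal.ofReal ((2:ℝ) ^ a) *
          (∫⁻ s in Set.Ioi (1:ℝ), ENNReal.ofReal (s ^ (a - β))) := by
  have h2N : (2:ℝ) < N := by nlinarith [Real.exp_one_gt_d9]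
  have hN2 : (2:ℝ) ≤ N ^ 2 := by nlinarith
  calc ∫⁻ s in Set.Ioo (0:ℝ) (N^2),
        ENNReal.ofReal (min ((s * (1 - s / N ^ 2)) ^ (-(β/2))) (s ^ (-β)) * (2*s) ^ a)
      ≤ ∫⁻ s in Set.Ioc (0:ℝ) 1 ∪ Set.Ioi 1,
        ENNReal.ofReal (min ((s * (1 - s / N ^ 2)) ^ (-(β/2))) (s ^ (-β)) * (2*s) ^ a) := by
        refine lintegral_mono_set fun x hx => ?_
        rcases le_or_gt x 1 with h | h
        · exact Or.inl ⟨hx.1, h⟩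
        · exact Or.inr h
  _ = (∫⁻ s in Set.Ioc (0:ℝ) 1,
        ENNReal.ofReal (min ((s * (1 - s / N ^ 2)) ^ (-(β/2))) (s ^ (-β)) * (2*s) ^ a))
      + ∫⁻ s in Set.Ioi (1:ℝ),
        ENNReal.ofReal (min ((s * (1 - s / N ^ 2)) ^ (-(β/2))) (s ^ (-β)) * (2*s) ^ a) :=
      lintegral_union measurableSet_Ioi Set.Ioc_disjoint_Ioi_same
  _ ≤ ENNReal.ofReal ((2:ℝ) ^ (β/2) * 2 ^ a) *
          (∫⁻ s in Set.Ioc (0:ℝ) 1, ENNReal.ofReal (s ^ (a - β/2)))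
        + ENNReal.ofReal ((2:ℝ) ^ a) *
          (∫⁻ s in Set.Ioi (1:ℝ), ENNReal.ofReal (s ^ (a - β))) := by
      refine add_le_add ?_ ?_
      · rw [← lintegral_const_mul' _ _ ENNReal.ofReal_ne_top]
        refine setLIntegral_mono' measurableSet_Ioc fun s hs => ?_
        have hs0 : 0 < s := hs.1
        rw [← ENNReal.ofReal_mul (by positivity)]
        refine ENNReal.ofReal_le_ofReal ?_
        have hhalf : (1:ℝ)/2 ≤ 1 - s / N ^ 2 := by
          have h1 : s / N ^ 2 ≤ 1/2 := by
            rw [div_le_iff₀ (by positivity)]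
            nlinarith [hs.2]
          linarith
        have hmin : min ((s * (1 - s / N ^ 2)) ^ (-(β/2))) (s ^ (-β))
            ≤ 2 ^ (β/2) * s ^ (-(β/2)) := by
          calc min ((s * (1 - s / N ^ 2)) ^ (-(β/2))) (s ^ (-β))
              ≤ (s * (1 - s / N ^ 2)) ^ (-(β/2)) := min_le_left _ _
          _ ≤ (s * (1/2)) ^ (-(β/2)) :=
              Real.rpow_le_rpow_of_nonpos (by positivity) (by nlinarith) (by linarith)
          _ = 2 ^ (β/2) * s ^ (-(β/2)) := by
              have h12 : ((1:ℝ)/2) ^ (-(β/2)) = 2 ^ (β/2) := by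
                rw [one_div, Real.inv_rpow (by norm_num : (0:ℝ) ≤ 2),
                  Real.rpow_neg (by norm_num : (0:ℝ) ≤ 2), inv_inv]
              rw [Real.mul_rpow hs0.le (by norm_num : (0:ℝ) ≤ 1/2), h12, mul_comm]
        have h2s : (2*s : ℝ) ^ a = 2 ^ a * s ^ a := Real.mul_rpow (by norm_num) hs0.le
        have hss : s ^ (-(β/2)) * s ^ a = s ^ (a - β/2) := by
          rw [← Real.rpow_add hs0]; congr 1; ring
        calc min ((s * (1 - s / N ^ 2)) ^ (-(β/2))) (s ^ (-β)) * (2*s) ^ a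
            ≤ (2 ^ (β/2) * s ^ (-(β/2))) * (2 ^ a * s ^ a) := by
              rw [h2s]
              exact mul_le_mul_of_nonneg_right hmin (by positivity)
        _ = 2 ^ (β/2) * 2 ^ a * s ^ (a - β/2) := by rw [← hss]; ring
      · rw [← lintegral_const_mul' _ _ ENNReal.ofReal_ne_top]
        refine setLIntegral_mono' measurableSet_Ioi fun s hs => ?_
        have hs0 : (0:ℝ) < s := lt_trans one_pos hs
        rw [← ENNReal.ofReal_mul (by positivity)]
        refine ENNReal.ofReal_le_ofReal ?_
        have h2s : (2*s : ℝ) ^ a = 2 ^ a * s ^ a := Real.mul_rpow (by norm_num) hs0.le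
        have hss : s ^ (-β) * s ^ a = s ^ (a - β) := by
          rw [← Real.rpow_add hs0]; congr 1; ring
        calc min ((s * (1 - s / N ^ 2)) ^ (-(β/2))) (s ^ (-β)) * (2*s) ^ a
            ≤ s ^ (-β) * (2 ^ a * s ^ a) := by
              rw [h2s]
              exact mul_le_mul_of_nonneg_right (min_le_right _ _) (by positivity)
        _ = 2 ^ a * s ^ (a - β) := by rw [← hss]; ring

/-- Lemma 6.4: for `1 < β < 2`, the triple integral
`∫_{[0,N²]²} ds₁ ds₂ [min((s₁(1-s₁/N²))^{-β/2}, s₁^{-β})] [min((s₂(1-s₂/N²))^{-β/2}, s₂^{-β})]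
  (1/(2s₁)+1/(2s₂))^{β-1} ∫_0^1 λ^{-β/2} min((1/(2s₁)+1/(2s₂))^{-β/2}(1-λ)^{-β/2}, λ^{-β/2}) dλ`
is bounded uniformly over `N ≥ e`. -/
theorem Phi1_bound_beta_gt_one (β : ℝ) (hβ1 : 1 < β) (hβ2 : β < 2) :
    ∃ C : ℝ, ∀ N : ℝ, Real.exp 1 ≤ N →
      (∫⁻ s₁ in Set.Icc (0 : ℝ) (N ^ 2), ∫⁻ s₂ in Set.Icc (0 : ℝ) (N ^ 2),
          ENNReal.ofReal (min ((s₁ * (1 - s₁ / N ^ 2)) ^ (-(β / 2))) (s₁ ^ (-β))) *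
            ENNReal.ofReal (min ((s₂ * (1 - s₂ / N ^ 2)) ^ (-(β / 2))) (s₂ ^ (-β))) *
            ENNReal.ofReal ((1 / (2 * s₁) + 1 / (2 * s₂)) ^ (β - 1)) *
            ∫⁻ l in Set.Icc (0 : ℝ) 1,
              ENNReal.ofReal (l ^ (-(β / 2)) *
                min ((1 / (2 * s₁) + 1 / (2 * s₂)) ^ (-(β / 2)) * (1 - l) ^ (-(β / 2)))
                  (l ^ (-(β / 2)))))
        ≤ ENNReal.ofReal C := by
  have hβ0 : (0:ℝ) < β := by linarith
  obtain ⟨θ, hθ0, hθ1, h3, h4⟩ :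
      ∃ θ : ℝ, 0 < θ ∧ θ ≤ 1 ∧ β - 1 < θ * β / 2 ∧ θ * β / 2 < 3 * (β - 1) := by
    refine ⟨min 1 (4 - 4/β), ?_, min_le_left _ _, ?_, ?_⟩
    · refine lt_min one_pos ?_
      rw [sub_pos, div_lt_iff₀ hβ0]; linarith
    · rcases le_total (1:ℝ) (4 - 4/β) with h | h
      · rw [min_eq_left h]; linarith
      · rw [min_eq_right h]
        have e : (4 - 4/β) * β / 2 = 2*β - 2 := by field_simp; ring
        rw [e]; linarith
    · rcases le_total (1:ℝ) (4 - 4/β) with h | h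
      · rw [min_eq_left h]
        have h43 : 4 ≤ 3 * β := by
          have h' : 4 / β ≤ 3 := by linarith
          rw [div_le_iff₀ hβ0] at h'; linarith
        linarith
      · rw [min_eq_right h]
        have e : (4 - 4/β) * β / 2 = 2*β - 2 := by field_simp; ring
        rw [e]; linarith
  set a : ℝ := (1 + θ * β / 2 - β) / 2 with ha_def
  have ha : 0 < a := by rw [ha_def]; linarith
  have haβ : a - β < -1 := by rw [ha_def]; linarith
  have ha2 : -1 < a - β / 2 := by rw [ha_def]; linarith
  set q : ℝ := β - θ * β / 2 with hq_def
  set r : ℝ := θ * β / 2 with hr_def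
  have hq0 : 0 ≤ q := by rw [hq_def]; nlinarith
  have hq1 : q < 1 := by rw [hq_def]; linarith
  have hr0 : 0 ≤ r := by rw [hr_def]; positivity
  have hr1 : r < 1 := by rw [hr_def]; nlinarith
  set K : ℝ≥0∞ := ∫⁻ l in Set.Icc (0:ℝ) 1, ENNReal.ofReal (l ^ (-q) * (1 - l) ^ (-r))
    with hK_def
  have hK : K < ⊤ := lint_beta hq0 hq1 hr0 hr1
  set D : ℝ≥0∞ := ENNReal.ofReal ((2:ℝ) ^ (β/2) * 2 ^ a) *
      (∫⁻ s in Set.Ioc (0:ℝ) 1, ENNReal.ofReal (s ^ (a - β/2)))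
    + ENNReal.ofReal ((2:ℝ) ^ a) *
      (∫⁻ s in Set.Ioi (1:ℝ), ENNReal.ofReal (s ^ (a - β))) with hD_def
  have hD : D < ⊤ := by
    rw [hD_def]
    exact ENNReal.add_lt_top.mpr
      ⟨ENNReal.mul_lt_top ENNReal.ofReal_lt_top (lint_rpow_Ioc ha2),
       ENNReal.mul_lt_top ENNReal.ofReal_lt_top (lint_rpow_Ioi haβ)⟩
  refine ⟨(K * (D * D)).toReal, fun N hN => ?_⟩
  have hfin : K * (D * D) ≠ ⊤ :=
    ENNReal.mul_ne_top hK.ne (ENNReal.mul_ne_top hD.ne hD.ne)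
  rw [ENNReal.ofReal_toReal hfin]
  set g : ℝ → ℝ≥0∞ := fun s =>
    ENNReal.ofReal (min ((s * (1 - s / N ^ 2)) ^ (-(β/2))) (s ^ (-β)) * (2*s) ^ a)
    with hg_def
  have hgne : ∀ s, g s ≠ ⊤ := fun s => by rw [hg_def]; exact ENNReal.ofReal_ne_top
  have hgint : ∫⁻ s in Set.Ioo (0:ℝ) (N^2), g s ≤ D := by
    rw [hD_def, hg_def]
    exact s_int_bound hβ1 hβ2 ha hN
  have key : ∀ s₁ ∈ Set.Ioo (0:ℝ) (N^2), ∀ s₂ ∈ Set.Ioo (0:ℝ) (N^2),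
      ENNReal.ofReal (min ((s₁ * (1 - s₁ / N ^ 2)) ^ (-(β / 2))) (s₁ ^ (-β))) *
        ENNReal.ofReal (min ((s₂ * (1 - s₂ / N ^ 2)) ^ (-(β / 2))) (s₂ ^ (-β))) *
        ENNReal.ofReal ((1 / (2 * s₁) + 1 / (2 * s₂)) ^ (β - 1)) *
        (∫⁻ l in Set.Icc (0 : ℝ) 1,
          ENNReal.ofReal (l ^ (-(β / 2)) *
            min ((1 / (2 * s₁) + 1 / (2 * s₂)) ^ (-(β / 2)) * (1 - l) ^ (-(β / 2)))
              (l ^ (-(β / 2)))))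
      ≤ g s₁ * g s₂ * K := by
    intro s₁ hs₁ s₂ hs₂
    have hs₁0 : 0 < s₁ := hs₁.1
    have hs₂0 : 0 < s₂ := hs₂.1
    set x : ℝ := 1 / (2 * s₁) + 1 / (2 * s₂) with hx_def
    have hx : 0 < x := by rw [hx_def]; positivity
    -- inner integral bound
    have hinner : (∫⁻ l in Set.Icc (0 : ℝ) 1,
          ENNReal.ofReal (l ^ (-(β / 2)) *
            min (x ^ (-(β / 2)) * (1 - l) ^ (-(β / 2))) (l ^ (-(β / 2)))))
        ≤ ENNReal.ofReal (x ^ (-(β/2) * θ)) * K := by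
      have hpt : ∀ l ∈ Set.Icc (0:ℝ) 1,
          ENNReal.ofReal (l ^ (-(β / 2)) *
            min (x ^ (-(β / 2)) * (1 - l) ^ (-(β / 2))) (l ^ (-(β / 2))))
          ≤ ENNReal.ofReal (x ^ (-(β/2) * θ) * (l ^ (-q) * (1 - l) ^ (-r))) := by
        intro l hl
        rcases eq_or_lt_of_le hl.1 with h0 | hl0
        · rw [← h0, Real.zero_rpow (by intro h; nlinarith : -(β/2) ≠ 0), zero_mul,
            ENNReal.ofReal_zero]
          exact zero_le
        · refine ENNReal.ofReal_le_ofReal ?_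
          have h1l : 0 ≤ 1 - l := by linarith [hl.2]
          have hmin : min (x ^ (-(β / 2)) * (1 - l) ^ (-(β / 2))) (l ^ (-(β / 2)))
              ≤ (x ^ (-(β / 2)) * (1 - l) ^ (-(β / 2))) ^ θ * (l ^ (-(β / 2))) ^ (1 - θ) :=
            min_le_geom
              (mul_nonneg (Real.rpow_nonneg hx.le _) (Real.rpow_nonneg h1l _))
              (Real.rpow_nonneg hl0.le (-(β/2))) hθ0.le hθ1
          calc l ^ (-(β / 2)) *
              min (x ^ (-(β / 2)) * (1 - l) ^ (-(β / 2))) (l ^ (-(β / 2)))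
              ≤ l ^ (-(β / 2)) *
                ((x ^ (-(β / 2)) * (1 - l) ^ (-(β / 2))) ^ θ * (l ^ (-(β / 2))) ^ (1 - θ)) :=
                mul_le_mul_of_nonneg_left hmin (Real.rpow_nonneg hl0.le _)
          _ = x ^ (-(β/2) * θ) * (l ^ (-q) * (1 - l) ^ (-r)) := by
              have e1 : l ^ (-(β/2)) * l ^ (-(β/2) * (1 - θ)) = l ^ (-q) := by
                rw [← Real.rpow_add hl0]; congr 1; rw [hq_def]; ring
              have e2 : -(β/2) * θ = -r := by rw [hr_def]; ring
              rw [Real.mul_rpow (Real.rpow_nonneg hx.le _) (Real.rpow_nonneg h1l _),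
                ← Real.rpow_mul hx.le, ← Real.rpow_mul h1l, ← Real.rpow_mul hl0.le,
                e2, ← e1]
              ring
      calc (∫⁻ l in Set.Icc (0 : ℝ) 1,
            ENNReal.ofReal (l ^ (-(β / 2)) *
              min (x ^ (-(β / 2)) * (1 - l) ^ (-(β / 2))) (l ^ (-(β / 2)))))
          ≤ ∫⁻ l in Set.Icc (0:ℝ) 1,
            ENNReal.ofReal (x ^ (-(β/2) * θ) * (l ^ (-q) * (1 - l) ^ (-r))) :=
            setLIntegral_mono' measurableSet_Icc hpt
      _ = ENNReal.ofReal (x ^ (-(β/2) * θ)) * K := by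
          simp_rw [ENNReal.ofReal_mul (Real.rpow_nonneg hx.le (-(β/2) * θ))]
          rw [lintegral_const_mul' _ _ ENNReal.ofReal_ne_top, ← hK_def]
    -- middle factor bound
    have hx2 : x ^ (β - 1 + -(β/2) * θ) ≤ (2*s₁) ^ a * (2*s₂) ^ a := by
      have e0 : β - 1 + -(β/2) * θ = -(2*a) := by rw [ha_def]; ring
      rw [e0]
      have hsq : Real.sqrt ((1/(2*s₁)) * (1/(2*s₂))) ≤ x := by
        rw [hx_def]
        calc Real.sqrt ((1/(2*s₁)) * (1/(2*s₂)))
            ≤ Real.sqrt ((1/(2*s₁) + 1/(2*s₂))^2) := Real.sqrt_le_sqrt (by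
              nlinarith [mul_pos (show (0:ℝ) < 1/(2*s₁) by positivity)
                  (show (0:ℝ) < 1/(2*s₂) by positivity),
                sq_nonneg (1/(2*s₁)), sq_nonneg (1/(2*s₂))])
        _ = 1/(2*s₁) + 1/(2*s₂) := Real.sqrt_sq (by positivity)
      have hinv : ∀ w : ℝ, 0 < w → (1/w) ^ (-a) = w ^ a := by
        intro w hw
        rw [one_div, Real.inv_rpow hw.le, Real.rpow_neg hw.le, inv_inv]
      calc x ^ (-(2*a))
          ≤ (Real.sqrt ((1/(2*s₁)) * (1/(2*s₂)))) ^ (-(2*a)) :=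
            Real.rpow_le_rpow_of_nonpos (Real.sqrt_pos.mpr (by positivity)) hsq
              (by linarith)
      _ = ((1/(2*s₁)) * (1/(2*s₂))) ^ (-a) := by
          rw [Real.sqrt_eq_rpow, ← Real.rpow_mul (by positivity)]
          congr 1; ring
      _ = (2*s₁) ^ a * (2*s₂) ^ a := by
          rw [Real.mul_rpow (by positivity) (by positivity),
            hinv _ (by positivity), hinv _ (by positivity)]
    have hNsq : (0:ℝ) < N ^ 2 := lt_trans hs₁0 hs₁.2
    have hb₁ : 0 ≤ s₁ * (1 - s₁ / N ^ 2) :=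
      mul_nonneg hs₁0.le (by rw [sub_nonneg]; exact (div_le_one hNsq).mpr hs₁.2.le)
    have hb₂ : 0 ≤ s₂ * (1 - s₂ / N ^ 2) :=
      mul_nonneg hs₂0.le (by rw [sub_nonneg]; exact (div_le_one hNsq).mpr hs₂.2.le)
    have hm₁ : 0 ≤ min ((s₁ * (1 - s₁ / N ^ 2)) ^ (-(β / 2))) (s₁ ^ (-β)) :=
      le_min (Real.rpow_nonneg hb₁ _) (Real.rpow_nonneg hs₁0.le _)
    have hm₂ : 0 ≤ min ((s₂ * (1 - s₂ / N ^ 2)) ^ (-(β / 2))) (s₂ ^ (-β)) :=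
      le_min (Real.rpow_nonneg hb₂ _) (Real.rpow_nonneg hs₂0.le _)
    calc ENNReal.ofReal (min ((s₁ * (1 - s₁ / N ^ 2)) ^ (-(β / 2))) (s₁ ^ (-β))) *
        ENNReal.ofReal (min ((s₂ * (1 - s₂ / N ^ 2)) ^ (-(β / 2))) (s₂ ^ (-β))) *
        ENNReal.ofReal (x ^ (β - 1)) *
        (∫⁻ l in Set.Icc (0 : ℝ) 1,
          ENNReal.ofReal (l ^ (-(β / 2)) *
            min (x ^ (-(β / 2)) * (1 - l) ^ (-(β / 2))) (l ^ (-(β / 2)))))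
        ≤ ENNReal.ofReal (min ((s₁ * (1 - s₁ / N ^ 2)) ^ (-(β / 2))) (s₁ ^ (-β))) *
          ENNReal.ofReal (min ((s₂ * (1 - s₂ / N ^ 2)) ^ (-(β / 2))) (s₂ ^ (-β))) *
          ENNReal.ofReal (x ^ (β - 1)) *
          (ENNReal.ofReal (x ^ (-(β/2) * θ)) * K) := mul_le_mul_right hinner _
    _ = ENNReal.ofReal (min ((s₁ * (1 - s₁ / N ^ 2)) ^ (-(β / 2))) (s₁ ^ (-β))) *
          ENNReal.ofReal (min ((s₂ * (1 - s₂ / N ^ 2)) ^ (-(β / 2))) (s₂ ^ (-β))) *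
          ENNReal.ofReal (x ^ (β - 1 + -(β/2) * θ)) * K := by
        rw [Real.rpow_add hx, ENNReal.ofReal_mul (Real.rpow_nonneg hx.le _)]
        ring
    _ ≤ ENNReal.ofReal (min ((s₁ * (1 - s₁ / N ^ 2)) ^ (-(β / 2))) (s₁ ^ (-β))) *
          ENNReal.ofReal (min ((s₂ * (1 - s₂ / N ^ 2)) ^ (-(β / 2))) (s₂ ^ (-β))) *
          ENNReal.ofReal ((2*s₁) ^ a * (2*s₂) ^ a) * K :=
        mul_le_mul_left (mul_le_mul_right (ENNReal.ofReal_le_ofReal hx2) _) K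
    _ = g s₁ * g s₂ * K := by
        have hg1 : ∀ s : ℝ, 0 ≤ min ((s * (1 - s / N ^ 2)) ^ (-(β / 2))) (s ^ (-β)) →
            g s = ENNReal.ofReal (min ((s * (1 - s / N ^ 2)) ^ (-(β/2))) (s ^ (-β))) *
              ENNReal.ofReal ((2*s) ^ a) := fun s hs => by
          rw [hg_def]; exact ENNReal.ofReal_mul hs
        rw [hg1 s₁ hm₁, hg1 s₂ hm₂,
          ENNReal.ofReal_mul (Real.rpow_nonneg (by positivity : (0:ℝ) ≤ 2*s₁) a)]
        ring
  -- assemble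
  calc (∫⁻ s₁ in Set.Icc (0 : ℝ) (N ^ 2), ∫⁻ s₂ in Set.Icc (0 : ℝ) (N ^ 2),
          ENNReal.ofReal (min ((s₁ * (1 - s₁ / N ^ 2)) ^ (-(β / 2))) (s₁ ^ (-β))) *
            ENNReal.ofReal (min ((s₂ * (1 - s₂ / N ^ 2)) ^ (-(β / 2))) (s₂ ^ (-β))) *
            ENNReal.ofReal ((1 / (2 * s₁) + 1 / (2 * s₂)) ^ (β - 1)) *
            ∫⁻ l in Set.Icc (0 : ℝ) 1,
              ENNReal.ofReal (l ^ (-(β / 2)) *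
                min ((1 / (2 * s₁) + 1 / (2 * s₂)) ^ (-(β / 2)) * (1 - l) ^ (-(β / 2)))
                  (l ^ (-(β / 2)))))
      = ∫⁻ s₁ in Set.Ioo (0 : ℝ) (N ^ 2), ∫⁻ s₂ in Set.Ioo (0 : ℝ) (N ^ 2),
          ENNReal.ofReal (min ((s₁ * (1 - s₁ / N ^ 2)) ^ (-(β / 2))) (s₁ ^ (-β))) *
            ENNReal.ofReal (min ((s₂ * (1 - s₂ / N ^ 2)) ^ (-(β / 2))) (s₂ ^ (-β))) *
            ENNReal.ofReal ((1 / (2 * s₁) + 1 / (2 * s₂)) ^ (β - 1)) *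
            ∫⁻ l in Set.Icc (0 : ℝ) 1,
              ENNReal.ofReal (l ^ (-(β / 2)) *
                min ((1 / (2 * s₁) + 1 / (2 * s₂)) ^ (-(β / 2)) * (1 - l) ^ (-(β / 2)))
                  (l ^ (-(β / 2)))) := by
        rw [setLIntegral_congr ((Ioo_ae_eq_Icc (μ := (volume : Measure ℝ))
          (a := 0) (b := N^2)).symm)]
        exact lintegral_congr fun s₁ => setLIntegral_congr
          ((Ioo_ae_eq_Icc (μ := (volume : Measure ℝ)) (a := 0) (b := N^2)).symm)
  _ ≤ ∫⁻ s₁ in Set.Ioo (0 : ℝ) (N ^ 2), ∫⁻ s₂ in Set.Ioo (0 : ℝ) (N ^ 2),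
        g s₁ * g s₂ * K :=
      setLIntegral_mono' measurableSet_Ioo fun s₁ hs₁ =>
        setLIntegral_mono' measurableSet_Ioo fun s₂ hs₂ => key s₁ hs₁ s₂ hs₂
  _ = ∫⁻ s₁ in Set.Ioo (0 : ℝ) (N ^ 2),
        (g s₁ * K) * ∫⁻ s₂ in Set.Ioo (0 : ℝ) (N ^ 2), g s₂ := by
      refine lintegral_congr fun s₁ => ?_
      rw [← lintegral_const_mul' (g s₁ * K) _ (ENNReal.mul_ne_top (hgne s₁) hK.ne)]
      exact lintegral_congr fun s₂ => by ring
  _ ≤ ∫⁻ s₁ in Set.Ioo (0 : ℝ) (N ^ 2), (g s₁ * K) * D := by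
      refine lintegral_mono fun s₁ => ?_
      exact mul_le_mul_right hgint _
  _ = (K * D) * ∫⁻ s₁ in Set.Ioo (0 : ℝ) (N ^ 2), g s₁ := by
      rw [← lintegral_const_mul' (K * D) _ (ENNReal.mul_ne_top hK.ne hD.ne)]
      exact lintegral_congr fun s₁ => by ring
  _ ≤ (K * D) * D := mul_le_mul_right hgint _
  _ = K * (D * D) := by ring
end

section
/- There exists a constant C > 0 such that for all N ≥ e: ∫_{[0,N²]²} ds₁ ds₂ [ min( (s₁(1−s₁/N²))^{−1/2} , s₁^{−1} ) ] · [ min( (s₂(1−s₂/N²))^{−1/2} , s₂^{−1} ) ] · ∫_0^1 λ^{−1/2} min( (1/(2s₁)+1/(2s₂))^{−1/2} (1−λ)^{−1/2} , λ^{−1/2} ) dλ ≤ C (log N)³. -/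
open MeasureTheory Set

namespace Lemma65Aux

lemma measurable_rpow_const (q : ℝ) : Measurable fun x : ℝ => x ^ q :=
  measurable_of_continuousOn_compl_singleton 0 fun x hx =>
    (Real.continuousAt_rpow_const x q (Or.inl hx)).continuousWithinAt

lemma inv_two_rpow : ((2:ℝ))⁻¹ ^ (-(1:ℝ)/2) = Real.sqrt 2 := by
  rw [Real.inv_rpow (by norm_num : (0:ℝ) ≤ 2), ← Real.rpow_neg (by norm_num : (0:ℝ) ≤ 2),
    Real.sqrt_eq_rpow]
  norm_num

lemma sqrt_two_le : Real.sqrt 2 ≤ 1.5 := by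
  nlinarith [Real.sq_sqrt (by norm_num : (0:ℝ) ≤ 2), Real.sqrt_nonneg 2]

lemma sqrt_two_ge : (1.4:ℝ) ≤ Real.sqrt 2 := by
  nlinarith [Real.sq_sqrt (by norm_num : (0:ℝ) ≤ 2), Real.sqrt_nonneg 2]

/-- `∫_0^t c·l^{-1/2} dl ≤ c·2√t`. -/
lemma lint_half (c t : ℝ) (hc : 0 ≤ c) (ht : 0 ≤ t) :
    ∫⁻ l in Ioc (0:ℝ) t, ENNReal.ofReal (c * l ^ (-(1:ℝ)/2))
      ≤ ENNReal.ofReal (c * (2 * Real.sqrt t)) := by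
  have hint : IntervalIntegrable (fun l : ℝ => c * l ^ (-(1:ℝ)/2)) volume 0 t := by
    apply IntervalIntegrable.const_mul
    apply intervalIntegral.intervalIntegrable_rpow'
    norm_num
  have h1 : ∫⁻ l in Ioc (0:ℝ) t, ENNReal.ofReal (c * l ^ (-(1:ℝ)/2))
      = ENNReal.ofReal (∫ l in Ioc (0:ℝ) t, c * l ^ (-(1:ℝ)/2)) := by
    rw [MeasureTheory.ofReal_integral_eq_lintegral_ofReal hint.1]
    filter_upwards [ae_restrict_mem measurableSet_Ioc] with l hl
    exact mul_nonneg hc (Real.rpow_nonneg hl.1.le _)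
  rw [h1]
  apply ENNReal.ofReal_le_ofReal
  rw [← intervalIntegral.integral_of_le ht, intervalIntegral.integral_const_mul,
    integral_rpow (Or.inl (by norm_num))]
  have h0 : (0:ℝ) ^ (-(1:ℝ)/2 + 1) = 0 := Real.zero_rpow (by norm_num)
  have h0' : t ^ (-(1:ℝ)/2 + 1) = Real.sqrt t := by
    rw [Real.sqrt_eq_rpow]; norm_num
  rw [h0, h0']
  have h2 : (Real.sqrt t - 0) / (-(1:ℝ)/2 + 1) = 2 * Real.sqrt t := by
    norm_num; ring
  rw [h2]

/-- `∫_a^b l^{-1} dl ≤ log(b/a)` for `0 < a ≤ b`. -/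
lemma lint_inv (a b : ℝ) (ha : 0 < a) (hab : a ≤ b) :
    ∫⁻ l in Ioc a b, ENNReal.ofReal (l ^ (-(1:ℝ)))
      ≤ ENNReal.ofReal (Real.log (b / a)) := by
  have hne : ∀ x ∈ Set.uIcc a b, x ≠ 0 := by
    intro x hx
    rw [Set.uIcc_of_le hab] at hx
    exact ne_of_gt (lt_of_lt_of_le ha hx.1)
  have hint : IntervalIntegrable (fun l : ℝ => l⁻¹) volume a b := by
    apply ContinuousOn.intervalIntegrable
    exact continuousOn_id.inv₀ hne
  have h2 : ∫⁻ l in Ioc a b, ENNReal.ofReal (l ^ (-(1:ℝ)))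
      = ∫⁻ l in Ioc a b, ENNReal.ofReal l⁻¹ := by
    apply lintegral_congr
    intro l
    rw [Real.rpow_neg_one]
  rw [h2, ← MeasureTheory.ofReal_integral_eq_lintegral_ofReal hint.1]
  · apply ENNReal.ofReal_le_ofReal
    rw [← intervalIntegral.integral_of_le hab,
      integral_inv (fun h => hne 0 h rfl)]
  · filter_upwards [ae_restrict_mem measurableSet_Ioc] with l hl
    exact inv_nonneg.mpr (ha.trans_le hl.1.le).le

/-- Bound on the one-dimensional outer integral. -/
lemma outer_bound (N : ℝ) (hN : Real.exp 1 ≤ N) :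
    ∫⁻ s in Icc (0:ℝ) (N ^ 2),
        ENNReal.ofReal (min ((s * (1 - s / N ^ 2)) ^ (-(1:ℝ)/2)) (s ^ (-(1:ℝ))))
      ≤ ENNReal.ofReal (5 * Real.log N) := by
  have hE : (2.7182818283 : ℝ) < Real.exp 1 := Real.exp_one_gt_d9
  have hN1 : (1:ℝ) ≤ N := by linarith
  have hN0 : (0:ℝ) < N := by linarith
  have hN2 : (2:ℝ) ≤ N ^ 2 := by nlinarith
  have hlog : (1:ℝ) ≤ Real.log N := by
    calc (1:ℝ) = Real.log (Real.exp 1) := (Real.log_exp 1).symm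
    _ ≤ Real.log N := Real.log_le_log (Real.exp_pos 1) hN
  rw [← MeasureTheory.setLIntegral_congr MeasureTheory.Ioc_ae_eq_Icc]
  have hsplit : Ioc (0:ℝ) (N ^ 2) = Ioc 0 1 ∪ Ioc 1 (N ^ 2) :=
    (Set.Ioc_union_Ioc_eq_Ioc (by norm_num) (by linarith)).symm
  rw [hsplit]
  refine le_trans (MeasureTheory.lintegral_union_le _ _ _) ?_
  have hpart1 : ∫⁻ s in Ioc (0:ℝ) 1,
      ENNReal.ofReal (min ((s * (1 - s / N ^ 2)) ^ (-(1:ℝ)/2)) (s ^ (-(1:ℝ))))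
      ≤ ENNReal.ofReal (Real.sqrt 2 * (2 * Real.sqrt 1)) := by
    calc ∫⁻ s in Ioc (0:ℝ) 1,
        ENNReal.ofReal (min ((s * (1 - s / N ^ 2)) ^ (-(1:ℝ)/2)) (s ^ (-(1:ℝ))))
        ≤ ∫⁻ s in Ioc (0:ℝ) 1, ENNReal.ofReal (Real.sqrt 2 * s ^ (-(1:ℝ)/2)) := by
          apply MeasureTheory.setLIntegral_mono
          · exact ((measurable_rpow_const (-(1:ℝ)/2)).const_mul
              (Real.sqrt 2)).ennreal_ofReal
          · intro s hs
            apply ENNReal.ofReal_le_ofReal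
            have hs0 : 0 < s := hs.1
            have hkey : s / 2 ≤ s * (1 - s / N ^ 2) := by
              have h1 : s / N ^ 2 ≤ 1 / 2 := by
                rw [div_le_div_iff₀ (by positivity) (by norm_num)]
                nlinarith [hs.2]
              nlinarith
            calc min ((s * (1 - s / N ^ 2)) ^ (-(1:ℝ)/2)) (s ^ (-(1:ℝ)))
                ≤ (s * (1 - s / N ^ 2)) ^ (-(1:ℝ)/2) := min_le_left _ _
              _ ≤ (s / 2) ^ (-(1:ℝ)/2) :=
                  Real.rpow_le_rpow_of_nonpos (by positivity) hkey (by norm_num)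
              _ = Real.sqrt 2 * s ^ (-(1:ℝ)/2) := by
                  rw [div_eq_mul_inv, Real.mul_rpow hs0.le (by norm_num), inv_two_rpow,
                    mul_comm]
      _ ≤ ENNReal.ofReal (Real.sqrt 2 * (2 * Real.sqrt 1)) :=
          lint_half (Real.sqrt 2) 1 (Real.sqrt_nonneg 2) (by norm_num)
  have hpart2 : ∫⁻ s in Ioc (1:ℝ) (N ^ 2),
      ENNReal.ofReal (min ((s * (1 - s / N ^ 2)) ^ (-(1:ℝ)/2)) (s ^ (-(1:ℝ))))
      ≤ ENNReal.ofReal (Real.log (N ^ 2 / 1)) := by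
    calc ∫⁻ s in Ioc (1:ℝ) (N ^ 2),
        ENNReal.ofReal (min ((s * (1 - s / N ^ 2)) ^ (-(1:ℝ)/2)) (s ^ (-(1:ℝ))))
        ≤ ∫⁻ s in Ioc (1:ℝ) (N ^ 2), ENNReal.ofReal (s ^ (-(1:ℝ))) := by
          apply MeasureTheory.setLIntegral_mono
          · exact (measurable_rpow_const (-(1:ℝ))).ennreal_ofReal
          · intro s _
            exact ENNReal.ofReal_le_ofReal (min_le_right _ _)
      _ ≤ ENNReal.ofReal (Real.log (N ^ 2 / 1)) := lint_inv 1 (N ^ 2) one_pos (by linarith)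
  refine le_trans (add_le_add hpart1 hpart2) ?_
  rw [← ENNReal.ofReal_add (by positivity) ?hnn]
  case hnn =>
    rw [div_one]
    exact Real.log_nonneg (by nlinarith)
  apply ENNReal.ofReal_le_ofReal
  rw [div_one, Real.sqrt_one]
  have hlp : Real.log (N ^ 2) = 2 * Real.log N := by
    rw [Real.log_pow]; norm_num
  rw [hlp]
  nlinarith [sqrt_two_le]

/-- Bound on the inner `λ` integral, for any `0 ≤ a ≤ √2 N`. -/
lemma inner_bound (N : ℝ) (hN : Real.exp 1 ≤ N) (a : ℝ) (ha0 : 0 ≤ a)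
    (haN : a ≤ Real.sqrt 2 * N) :
    ∫⁻ l in Icc (0:ℝ) 1,
        ENNReal.ofReal (l ^ (-(1:ℝ)/2) *
          min (a * (1 - l) ^ (-(1:ℝ)/2)) (l ^ (-(1:ℝ)/2)))
      ≤ ENNReal.ofReal (6 * Real.log N) := by
  have hE : (2.7182818283 : ℝ) < Real.exp 1 := Real.exp_one_gt_d9
  have hN1 : (1:ℝ) ≤ N := by linarith
  have hN0 : (0:ℝ) < N := by linarith
  have hN2 : (2:ℝ) ≤ N ^ 2 := by nlinarith
  have hlog : (1:ℝ) ≤ Real.log N := by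
    calc (1:ℝ) = Real.log (Real.exp 1) := (Real.log_exp 1).symm
    _ ≤ Real.log N := Real.log_le_log (Real.exp_pos 1) hN
  set t : ℝ := (2 * N ^ 2)⁻¹ with ht_def
  have ht0 : 0 < t := by positivity
  have ht_half : t ≤ 1 / 2 := by
    have h2 : (2:ℝ) ≤ 2 * N ^ 2 := by nlinarith
    calc t ≤ ((2:ℝ))⁻¹ := inv_anti₀ (by norm_num) h2
    _ = 1 / 2 := by norm_num
  have ht1 : t ≤ 1 := by linarith
  have hs2 : Real.sqrt 2 * Real.sqrt 2 = 2 := Real.mul_self_sqrt (by norm_num)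
  rw [← MeasureTheory.setLIntegral_congr MeasureTheory.Ioc_ae_eq_Icc]
  have hsplit : Ioc (0:ℝ) 1 = Ioc 0 t ∪ Ioc t 1 :=
    (Set.Ioc_union_Ioc_eq_Ioc ht0.le ht1).symm
  rw [hsplit]
  refine le_trans (MeasureTheory.lintegral_union_le _ _ _) ?_
  have hpart1 : ∫⁻ l in Ioc (0:ℝ) t,
      ENNReal.ofReal (l ^ (-(1:ℝ)/2) *
        min (a * (1 - l) ^ (-(1:ℝ)/2)) (l ^ (-(1:ℝ)/2)))
      ≤ ENNReal.ofReal ((2 * N) * (2 * Real.sqrt t)) := by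
    calc ∫⁻ l in Ioc (0:ℝ) t,
        ENNReal.ofReal (l ^ (-(1:ℝ)/2) *
          min (a * (1 - l) ^ (-(1:ℝ)/2)) (l ^ (-(1:ℝ)/2)))
        ≤ ∫⁻ l in Ioc (0:ℝ) t, ENNReal.ofReal ((2 * N) * l ^ (-(1:ℝ)/2)) := by
          apply MeasureTheory.setLIntegral_mono
          · exact ((measurable_rpow_const (-(1:ℝ)/2)).const_mul
              (2 * N)).ennreal_ofReal
          · intro l hl
            apply ENNReal.ofReal_le_ofReal
            have hl0 : 0 < l := hl.1
            have hl2 : (1:ℝ)/2 ≤ 1 - l := by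
              have := hl.2; linarith
            have h2 : (1 - l) ^ (-(1:ℝ)/2) ≤ Real.sqrt 2 := by
              calc (1 - l) ^ (-(1:ℝ)/2) ≤ ((1:ℝ)/2) ^ (-(1:ℝ)/2) :=
                  Real.rpow_le_rpow_of_nonpos (by norm_num) hl2 (by norm_num)
              _ = Real.sqrt 2 := by rw [one_div]; exact inv_two_rpow
            have h3 : a * (1 - l) ^ (-(1:ℝ)/2) ≤ 2 * N := by
              calc a * (1 - l) ^ (-(1:ℝ)/2) ≤ (Real.sqrt 2 * N) * Real.sqrt 2 :=
                  mul_le_mul haN h2 (Real.rpow_nonneg (by linarith) _) (by positivity)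
              _ = (Real.sqrt 2 * Real.sqrt 2) * N := by ring
              _ = 2 * N := by rw [hs2]
            calc l ^ (-(1:ℝ)/2) * min (a * (1 - l) ^ (-(1:ℝ)/2)) (l ^ (-(1:ℝ)/2))
                ≤ l ^ (-(1:ℝ)/2) * (2 * N) :=
                  mul_le_mul_of_nonneg_left (le_trans (min_le_left _ _) h3)
                    (Real.rpow_nonneg hl0.le _)
              _ = (2 * N) * l ^ (-(1:ℝ)/2) := by ring
      _ ≤ ENNReal.ofReal ((2 * N) * (2 * Real.sqrt t)) :=
          lint_half (2 * N) t (by positivity) ht0.le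
  have hpart2 : ∫⁻ l in Ioc t 1,
      ENNReal.ofReal (l ^ (-(1:ℝ)/2) *
        min (a * (1 - l) ^ (-(1:ℝ)/2)) (l ^ (-(1:ℝ)/2)))
      ≤ ENNReal.ofReal (Real.log (1 / t)) := by
    calc ∫⁻ l in Ioc t 1,
        ENNReal.ofReal (l ^ (-(1:ℝ)/2) *
          min (a * (1 - l) ^ (-(1:ℝ)/2)) (l ^ (-(1:ℝ)/2)))
        ≤ ∫⁻ l in Ioc t 1, ENNReal.ofReal (l ^ (-(1:ℝ))) := by
          apply MeasureTheory.setLIntegral_mono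
          · exact (measurable_rpow_const (-(1:ℝ))).ennreal_ofReal
          · intro l hl
            apply ENNReal.ofReal_le_ofReal
            have hl0 : 0 < l := ht0.trans hl.1
            calc l ^ (-(1:ℝ)/2) * min (a * (1 - l) ^ (-(1:ℝ)/2)) (l ^ (-(1:ℝ)/2))
                ≤ l ^ (-(1:ℝ)/2) * l ^ (-(1:ℝ)/2) :=
                  mul_le_mul_of_nonneg_left (min_le_right _ _)
                    (Real.rpow_nonneg hl0.le _)
              _ = l ^ (-(1:ℝ)) := by
                  rw [← Real.rpow_add hl0]; norm_num
      _ ≤ ENNReal.ofReal (Real.log (1 / t)) := lint_inv t 1 ht0 ht1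
  refine le_trans (add_le_add hpart1 hpart2) ?_
  have hsqrtt : Real.sqrt t = (Real.sqrt 2 * N)⁻¹ := by
    rw [ht_def, Real.sqrt_inv, Real.sqrt_mul (by norm_num), Real.sqrt_sq hN0.le]
  have hs0 : (0:ℝ) < Real.sqrt 2 := by nlinarith [sqrt_two_ge]
  have hv : (2 * N) * (2 * Real.sqrt t) ≤ 3 := by
    rw [hsqrtt, mul_inv]
    have heq : (2 * N) * (2 * ((Real.sqrt 2)⁻¹ * N⁻¹)) = 4 * (Real.sqrt 2)⁻¹ := by
      field_simp
      ring
    rw [heq]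
    nlinarith [inv_mul_cancel₀ (ne_of_gt hs0), sqrt_two_ge, inv_nonneg.mpr hs0.le]
  have hlt : Real.log (1 / t) ≤ 3 * Real.log N := by
    rw [ht_def, one_div, inv_inv]
    have hlg : Real.log (2 * N ^ 2) = Real.log 2 + 2 * Real.log N := by
      rw [Real.log_mul (by norm_num) (by positivity), Real.log_pow]
      norm_num
    rw [hlg]
    linarith [Real.log_two_lt_d9.le]
  rw [← ENNReal.ofReal_add (by positivity) ?hnn]
  case hnn =>
    rw [ht_def, one_div, inv_inv]
    exact Real.log_nonneg (by nlinarith)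
  apply ENNReal.ofReal_le_ofReal
  linarith

/-- The bound `a ≤ √2 N` for the coefficient of the inner integral. -/
lemma coeff_bound (N s₁ s₂ : ℝ) (hN1 : 1 ≤ N) (h1 : s₁ ∈ Icc (0:ℝ) (N ^ 2))
    (h2 : s₂ ∈ Icc (0:ℝ) (N ^ 2)) :
    (1 / (2 * s₁) + 1 / (2 * s₂)) ^ (-(1:ℝ)/2) ≤ Real.sqrt 2 * N := by
  have hN0 : (0:ℝ) < N := by linarith
  by_cases hs : 0 < s₁ ∨ 0 < s₂
  · have hsum : (2 * N ^ 2)⁻¹ ≤ 1 / (2 * s₁) + 1 / (2 * s₂) := by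
      rcases hs with h | h
      · have hb : (2 * N ^ 2)⁻¹ ≤ 1 / (2 * s₁) := by
          rw [one_div]
          apply inv_anti₀ (by linarith)
          nlinarith [h1.2]
        have hc : 0 ≤ 1 / (2 * s₂) := one_div_nonneg.mpr (by linarith [h2.1])
        linarith
      · have hb : (2 * N ^ 2)⁻¹ ≤ 1 / (2 * s₂) := by
          rw [one_div]
          apply inv_anti₀ (by linarith)
          nlinarith [h2.2]
        have hc : 0 ≤ 1 / (2 * s₁) := one_div_nonneg.mpr (by linarith [h1.1])
        linarith
    calc (1 / (2 * s₁) + 1 / (2 * s₂)) ^ (-(1:ℝ)/2)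
        ≤ ((2 * N ^ 2)⁻¹ : ℝ) ^ (-(1:ℝ)/2) :=
          Real.rpow_le_rpow_of_nonpos (by positivity) hsum (by norm_num)
      _ = (2 * N ^ 2) ^ ((1:ℝ)/2) := by
          rw [Real.inv_rpow (by positivity), ← Real.rpow_neg (by positivity)]
          norm_num
      _ = Real.sqrt 2 * N := by
          rw [← Real.sqrt_eq_rpow, Real.sqrt_mul (by norm_num), Real.sqrt_sq hN0.le]
  · push_neg at hs
    have hz1 : s₁ = 0 := le_antisymm hs.1 h1.1
    have hz2 : s₂ = 0 := le_antisymm hs.2 h2.1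
    have hzz : (1 / (2 * s₁) + 1 / (2 * s₂)) = 0 := by rw [hz1, hz2]; norm_num
    rw [hzz, Real.zero_rpow (by norm_num)]
    positivity

end Lemma65Aux

open Lemma65Aux

/-- Lemma 6.5 (β = 1): there is `C > 0` so that for all `N ≥ e`,
`∫_{[0,N²]²} ds₁ ds₂ [min((s₁(1-s₁/N²))^{-1/2}, s₁^{-1})] [min((s₂(1-s₂/N²))^{-1/2}, s₂^{-1})]
  ∫_0^1 λ^{-1/2} min((1/(2s₁)+1/(2s₂))^{-1/2}(1-λ)^{-1/2}, λ^{-1/2}) dλ ≤ C (log N)³`. -/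
theorem Phi1_bound_beta_eq_one :
    ∃ C : ℝ, 0 < C ∧ ∀ N : ℝ, Real.exp 1 ≤ N →
      (∫⁻ s₁ in Set.Icc (0 : ℝ) (N ^ 2), ∫⁻ s₂ in Set.Icc (0 : ℝ) (N ^ 2),
          ENNReal.ofReal (min ((s₁ * (1 - s₁ / N ^ 2)) ^ (-(1 : ℝ) / 2)) (s₁ ^ (-(1 : ℝ)))) *
            ENNReal.ofReal (min ((s₂ * (1 - s₂ / N ^ 2)) ^ (-(1 : ℝ) / 2)) (s₂ ^ (-(1 : ℝ)))) *
            ∫⁻ l in Set.Icc (0 : ℝ) 1,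
              ENNReal.ofReal (l ^ (-(1 : ℝ) / 2) *
                min ((1 / (2 * s₁) + 1 / (2 * s₂)) ^ (-(1 : ℝ) / 2) * (1 - l) ^ (-(1 : ℝ) / 2))
                  (l ^ (-(1 : ℝ) / 2))))
        ≤ ENNReal.ofReal (C * Real.log N ^ 3) := by
  refine ⟨150, by norm_num, fun N hN => ?_⟩
  have hE : (2.7182818283 : ℝ) < Real.exp 1 := Real.exp_one_gt_d9
  have hN1 : (1:ℝ) ≤ N := by linarith
  have hlog : (1:ℝ) ≤ Real.log N := by
    calc (1:ℝ) = Real.log (Real.exp 1) := (Real.log_exp 1).symm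
    _ ≤ Real.log N := Real.log_le_log (Real.exp_pos 1) hN
  have hFmeas : Measurable (fun s : ℝ =>
      ENNReal.ofReal (min ((s * (1 - s / N ^ 2)) ^ (-(1 : ℝ) / 2)) (s ^ (-(1 : ℝ))))) := by
    apply Measurable.ennreal_ofReal
    apply Measurable.min
    · exact (measurable_rpow_const (-(1:ℝ)/2)).comp
        (measurable_id.mul (measurable_const.sub (measurable_id.div_const _)))
    · exact measurable_rpow_const (-(1:ℝ))
  have houter : (∫⁻ s in Set.Icc (0:ℝ) (N ^ 2),
      ENNReal.ofReal (min ((s * (1 - s / N ^ 2)) ^ (-(1 : ℝ) / 2)) (s ^ (-(1 : ℝ)))))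
      ≤ ENNReal.ofReal (5 * Real.log N) := outer_bound N hN
  have hinner : ∀ s₁ ∈ Set.Icc (0:ℝ) (N ^ 2), ∀ s₂ ∈ Set.Icc (0:ℝ) (N ^ 2),
      (∫⁻ l in Set.Icc (0 : ℝ) 1,
        ENNReal.ofReal (l ^ (-(1 : ℝ) / 2) *
          min ((1 / (2 * s₁) + 1 / (2 * s₂)) ^ (-(1 : ℝ) / 2) * (1 - l) ^ (-(1 : ℝ) / 2))
            (l ^ (-(1 : ℝ) / 2))))
      ≤ ENNReal.ofReal (6 * Real.log N) := by
    intro s₁ h1 s₂ h2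
    refine inner_bound N hN _ (Real.rpow_nonneg ?_ _) (coeff_bound N s₁ s₂ hN1 h1 h2)
    have ha1 : (0:ℝ) ≤ 1 / (2 * s₁) := one_div_nonneg.mpr (by linarith [h1.1])
    have ha2 : (0:ℝ) ≤ 1 / (2 * s₂) := one_div_nonneg.mpr (by linarith [h2.1])
    linarith
  have hne1 : ∀ s₁ : ℝ,
      ENNReal.ofReal (min ((s₁ * (1 - s₁ / N ^ 2)) ^ (-(1 : ℝ) / 2)) (s₁ ^ (-(1 : ℝ)))) *
        ENNReal.ofReal (6 * Real.log N) ≠ ⊤ :=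
    fun s₁ => ENNReal.mul_ne_top ENNReal.ofReal_ne_top ENNReal.ofReal_ne_top
  have key : ∀ s₁ ∈ Set.Icc (0:ℝ) (N ^ 2),
      (∫⁻ s₂ in Set.Icc (0 : ℝ) (N ^ 2),
          ENNReal.ofReal (min ((s₁ * (1 - s₁ / N ^ 2)) ^ (-(1 : ℝ) / 2)) (s₁ ^ (-(1 : ℝ)))) *
            ENNReal.ofReal (min ((s₂ * (1 - s₂ / N ^ 2)) ^ (-(1 : ℝ) / 2)) (s₂ ^ (-(1 : ℝ)))) *
            ∫⁻ l in Set.Icc (0 : ℝ) 1,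
              ENNReal.ofReal (l ^ (-(1 : ℝ) / 2) *
                min ((1 / (2 * s₁) + 1 / (2 * s₂)) ^ (-(1 : ℝ) / 2) * (1 - l) ^ (-(1 : ℝ) / 2))
                  (l ^ (-(1 : ℝ) / 2))))
      ≤ ENNReal.ofReal (min ((s₁ * (1 - s₁ / N ^ 2)) ^ (-(1 : ℝ) / 2)) (s₁ ^ (-(1 : ℝ)))) *
          (ENNReal.ofReal (5 * Real.log N) * ENNReal.ofReal (6 * Real.log N)) := by
    intro s₁ h1
    calc (∫⁻ s₂ in Set.Icc (0 : ℝ) (N ^ 2),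
          ENNReal.ofReal (min ((s₁ * (1 - s₁ / N ^ 2)) ^ (-(1 : ℝ) / 2)) (s₁ ^ (-(1 : ℝ)))) *
            ENNReal.ofReal (min ((s₂ * (1 - s₂ / N ^ 2)) ^ (-(1 : ℝ) / 2)) (s₂ ^ (-(1 : ℝ)))) *
            ∫⁻ l in Set.Icc (0 : ℝ) 1,
              ENNReal.ofReal (l ^ (-(1 : ℝ) / 2) *
                min ((1 / (2 * s₁) + 1 / (2 * s₂)) ^ (-(1 : ℝ) / 2) * (1 - l) ^ (-(1 : ℝ) / 2))
                  (l ^ (-(1 : ℝ) / 2))))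
        ≤ ∫⁻ s₂ in Set.Icc (0 : ℝ) (N ^ 2),
          ENNReal.ofReal (min ((s₁ * (1 - s₁ / N ^ 2)) ^ (-(1 : ℝ) / 2)) (s₁ ^ (-(1 : ℝ)))) *
            ENNReal.ofReal (min ((s₂ * (1 - s₂ / N ^ 2)) ^ (-(1 : ℝ) / 2)) (s₂ ^ (-(1 : ℝ)))) *
            ENNReal.ofReal (6 * Real.log N) := by
          apply MeasureTheory.setLIntegral_mono ((hFmeas.const_mul _).mul_const _)
          intro s₂ h2
          exact mul_le_mul_right (hinner s₁ h1 s₂ h2) _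
      _ = ∫⁻ s₂ in Set.Icc (0 : ℝ) (N ^ 2),
          (ENNReal.ofReal (min ((s₁ * (1 - s₁ / N ^ 2)) ^ (-(1 : ℝ) / 2)) (s₁ ^ (-(1 : ℝ)))) *
            ENNReal.ofReal (6 * Real.log N)) *
            ENNReal.ofReal (min ((s₂ * (1 - s₂ / N ^ 2)) ^ (-(1 : ℝ) / 2)) (s₂ ^ (-(1 : ℝ)))) := by
          apply lintegral_congr
          intro s₂
          ring
      _ = (ENNReal.ofReal (min ((s₁ * (1 - s₁ / N ^ 2)) ^ (-(1 : ℝ) / 2)) (s₁ ^ (-(1 : ℝ)))) *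
            ENNReal.ofReal (6 * Real.log N)) *
            ∫⁻ s₂ in Set.Icc (0 : ℝ) (N ^ 2),
              ENNReal.ofReal (min ((s₂ * (1 - s₂ / N ^ 2)) ^ (-(1 : ℝ) / 2)) (s₂ ^ (-(1 : ℝ)))) :=
          MeasureTheory.lintegral_const_mul' _ _ (hne1 s₁)
      _ ≤ (ENNReal.ofReal (min ((s₁ * (1 - s₁ / N ^ 2)) ^ (-(1 : ℝ) / 2)) (s₁ ^ (-(1 : ℝ)))) *
            ENNReal.ofReal (6 * Real.log N)) * ENNReal.ofReal (5 * Real.log N) :=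
          mul_le_mul_right houter _
      _ = ENNReal.ofReal (min ((s₁ * (1 - s₁ / N ^ 2)) ^ (-(1 : ℝ) / 2)) (s₁ ^ (-(1 : ℝ)))) *
            (ENNReal.ofReal (5 * Real.log N) * ENNReal.ofReal (6 * Real.log N)) := by
          ring
  calc (∫⁻ s₁ in Set.Icc (0 : ℝ) (N ^ 2), ∫⁻ s₂ in Set.Icc (0 : ℝ) (N ^ 2),
          ENNReal.ofReal (min ((s₁ * (1 - s₁ / N ^ 2)) ^ (-(1 : ℝ) / 2)) (s₁ ^ (-(1 : ℝ)))) *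
            ENNReal.ofReal (min ((s₂ * (1 - s₂ / N ^ 2)) ^ (-(1 : ℝ) / 2)) (s₂ ^ (-(1 : ℝ)))) *
            ∫⁻ l in Set.Icc (0 : ℝ) 1,
              ENNReal.ofReal (l ^ (-(1 : ℝ) / 2) *
                min ((1 / (2 * s₁) + 1 / (2 * s₂)) ^ (-(1 : ℝ) / 2) * (1 - l) ^ (-(1 : ℝ) / 2))
                  (l ^ (-(1 : ℝ) / 2))))
      ≤ ∫⁻ s₁ in Set.Icc (0 : ℝ) (N ^ 2),
          ENNReal.ofReal (min ((s₁ * (1 - s₁ / N ^ 2)) ^ (-(1 : ℝ) / 2)) (s₁ ^ (-(1 : ℝ)))) *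
            (ENNReal.ofReal (5 * Real.log N) * ENNReal.ofReal (6 * Real.log N)) :=
        MeasureTheory.setLIntegral_mono (hFmeas.mul_const _) key
    _ = (∫⁻ s₁ in Set.Icc (0 : ℝ) (N ^ 2),
          ENNReal.ofReal (min ((s₁ * (1 - s₁ / N ^ 2)) ^ (-(1 : ℝ) / 2)) (s₁ ^ (-(1 : ℝ))))) *
            (ENNReal.ofReal (5 * Real.log N) * ENNReal.ofReal (6 * Real.log N)) :=
        MeasureTheory.lintegral_mul_const' _ _
          (ENNReal.mul_ne_top ENNReal.ofReal_ne_top ENNReal.ofReal_ne_top)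
    _ ≤ ENNReal.ofReal (5 * Real.log N) *
          (ENNReal.ofReal (5 * Real.log N) * ENNReal.ofReal (6 * Real.log N)) :=
        mul_le_mul_left houter _
    _ = ENNReal.ofReal ((5 * Real.log N) * ((5 * Real.log N) * (6 * Real.log N))) := by
        have h5 : (0:ℝ) ≤ 5 * Real.log N := by linarith
        rw [← ENNReal.ofReal_mul h5, ← ENNReal.ofReal_mul h5]
    _ ≤ ENNReal.ofReal (150 * Real.log N ^ 3) := by
        apply ENNReal.ofReal_le_ofReal
        nlinarith [hlog]
end
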